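/- arXiv:2311.02470 — 3 statements merged into one kernel-verified Lean document; each statement's English description precedes it below -/
import Mathlib

section
/- Let n ≥ 3 be an integer and let a > 0, b > 0, q ≥ 1 and μ be real constants with max{−a, −b} < μ < 0, and let p be a real constant with 0 ≤ p < (4/(n−1))·(1 − μ/max{−a, −b}). Then there is no smooth function v : ℝⁿ → ℝ with v > 0 everywhere satisfying Δv + μ·v + a·v^{p+1} + b·v^{1−q} = 0 on all of ℝⁿ. (This is the Euclidean case of Corollary 2, since ℝⁿ is a noncompact complete manifold with nonnegative Ricci curvature.) -/
open Real

/-- The Euclidean Laplace operator: sum of second partial derivatives. -/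
noncomputable def lap {n : ℕ} (v : EuclideanSpace ℝ (Fin n) → ℝ)
    (x : EuclideanSpace ℝ (Fin n)) : ℝ :=
  ∑ i, fderiv ℝ (fun y => fderiv ℝ v y (EuclideanSpace.single i 1)) x
    (EuclideanSpace.single i 1)

/-- At a global minimum of a smooth real function, every pure second
directional derivative is nonnegative. -/
lemma secder_nonneg {E : Type*} [NormedAddCommGroup E] [NormedSpace ℝ E]
    (u : E → ℝ) (hu : ContDiff ℝ (⊤ : ℕ∞) u) (x₀ : E) (hmin : ∀ x, u x₀ ≤ u x) (w : E) :
    0 ≤ fderiv ℝ (fun y => fderiv ℝ u y w) x₀ w := by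
  by_contra hA
  push_neg at hA
  set F : E → ℝ := fun y => fderiv ℝ u y w with hFdef
  have hFc : ContDiff ℝ 1 F :=
    (hu.fderiv_right (m := 1) (by exact WithTop.coe_le_coe.mpr le_top)).clm_apply contDiff_const
  have hud : Differentiable ℝ u := hu.differentiable (by simp)
  set γ : ℝ → E := fun t => x₀ + t • w with hγdef
  have hγ : ∀ t : ℝ, HasDerivAt γ w t := by
    intro t
    have h1 : HasDerivAt (fun t : ℝ => t • w) w t := by
      simpa using (hasDerivAt_id t).smul_const w
    simpa [hγdef] using h1.const_add x₀
  have hγ0 : γ 0 = x₀ := by simp [hγdef]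
  have hh : ∀ t, HasDerivAt (fun s => u (γ s)) (F (γ t)) t := fun t =>
    (hud (γ t)).hasFDerivAt.comp_hasDerivAt t (hγ t)
  have hg : HasDerivAt (fun t => F (γ t)) (fderiv ℝ F x₀ w) 0 := by
    have h2 : HasFDerivAt F (fderiv ℝ F x₀) (γ 0) := by
      rw [hγ0]; exact ((hFc.differentiable one_ne_zero) x₀).hasFDerivAt
    have := h2.comp_hasDerivAt 0 (hγ 0)
    exact this
  have hloc : IsLocalMin u x₀ := Filter.Eventually.of_forall hmin
  have hz : fderiv ℝ u x₀ = 0 := hloc.fderiv_eq_zero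
  have hg0 : F (γ 0) = 0 := by simp [hFdef, hγ0, hz]
  rw [hasDerivAt_iff_tendsto_slope] at hg
  have hev : ∀ᶠ t in nhdsWithin (0:ℝ) {(0:ℝ)}ᶜ, slope (fun t => F (γ t)) 0 t < 0 :=
    hg.eventually_lt_const hA
  rw [eventually_nhdsWithin_iff] at hev
  rw [Metric.eventually_nhds_iff] at hev
  obtain ⟨δ, hδ, hδ'⟩ := hev
  have hneg : ∀ t : ℝ, t ∈ Set.Ioo (0:ℝ) δ → F (γ t) < 0 := by
    intro t ht
    have h3 : slope (fun t => F (γ t)) 0 t < 0 := by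
      apply hδ' (y := t)
      · simpa [abs_of_pos ht.1] using ht.2
      · simpa using ne_of_gt ht.1
    rw [slope_def_field] at h3
    rw [hg0] at h3
    have := div_neg_iff.mp (by simpa using h3)
    rcases this with ⟨h4, h5⟩ | ⟨h4, h5⟩
    · linarith [ht.1]
    · exact h4
  have hanti : StrictAntiOn (fun s => u (γ s)) (Set.Icc 0 (δ/2)) := by
    apply strictAntiOn_of_deriv_neg (convex_Icc _ _)
    · exact (hud.continuous.comp (by continuity)).continuousOn
    · intro t ht
      rw [interior_Icc] at ht
      rw [(hh t).deriv]
      exact hneg t ⟨ht.1, by linarith [ht.2, hδ]⟩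
  have h6 : u (γ (δ/2)) < u (γ 0) := by
    have := hanti (Set.left_mem_Icc.mpr (by linarith)) (Set.right_mem_Icc.mpr (by linarith))
      (by linarith)
    simpa using this
  rw [hγ0] at h6
  exact absurd (hmin (γ (δ/2))) (not_le.mpr h6)

/-- The Laplacian of `v + d‖·‖²`. -/
lemma lap_add_sq {n : ℕ} (v : EuclideanSpace ℝ (Fin n) → ℝ) (hv : ContDiff ℝ (⊤ : ℕ∞) v)
    (d : ℝ) (x : EuclideanSpace ℝ (Fin n)) :
    lap (fun y => v y + d * ‖y‖ ^ 2) x = lap v x + 2 * d * n := by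
  have hvd : Differentiable ℝ v := hv.differentiable (by simp)
  have hfd : ∀ y, HasFDerivAt (fun z : EuclideanSpace ℝ (Fin n) => v z + d * ‖z‖ ^ 2)
      (fderiv ℝ v y + d • ((2:ℕ) • innerSL ℝ y)) y := fun y =>
    (hvd y).hasFDerivAt.add ((hasStrictFDerivAt_norm_sq y).hasFDerivAt.const_mul d)
  have hterm : ∀ i : Fin n,
      fderiv ℝ (fun y => fderiv ℝ (fun z => v z + d * ‖z‖ ^ 2) y (EuclideanSpace.single i 1)) x
        (EuclideanSpace.single i 1)
      = fderiv ℝ (fun y => fderiv ℝ v y (EuclideanSpace.single i 1)) x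
        (EuclideanSpace.single i 1) + 2 * d := by
    intro i
    set e : EuclideanSpace ℝ (Fin n) := EuclideanSpace.single i (1:ℝ) with he
    have hcongr : (fun y => fderiv ℝ (fun z => v z + d * ‖z‖ ^ 2) y e)
        = fun y => fderiv ℝ v y e + (2*d) * (innerSL ℝ e y) := by
      funext y
      rw [(hfd y).fderiv]
      simp only [ContinuousLinearMap.add_apply, ContinuousLinearMap.smul_apply, smul_eq_mul,
        innerSL_apply_apply]
      rw [real_inner_comm]
      ring
    rw [hcongr]
    have h1 : DifferentiableAt ℝ (fun y => fderiv ℝ v y e) x :=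
      ((hv.fderiv_right (m := 1) (by exact WithTop.coe_le_coe.mpr le_top)).clm_apply contDiff_const).differentiable one_ne_zero x
    have h2 : HasFDerivAt (fun y : EuclideanSpace ℝ (Fin n) => (2*d) * (innerSL ℝ e y))
        ((2*d) • (innerSL ℝ e)) x :=
      (innerSL ℝ e).hasFDerivAt.const_mul (2*d)
    rw [fderiv_fun_add h1 h2.differentiableAt]
    rw [h2.fderiv]
    have hee : (inner ℝ e e : ℝ) = 1 := by
      rw [real_inner_self_eq_norm_sq]
      rw [he, EuclideanSpace.norm_single]
      norm_num
    simp only [ContinuousLinearMap.add_apply, ContinuousLinearMap.smul_apply, innerSL_apply_apply,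
      smul_eq_mul, hee]
    ring
  unfold lap
  rw [Finset.sum_congr rfl (fun i _ => hterm i)]
  rw [Finset.sum_add_distrib, Finset.sum_const, Finset.card_univ, Fintype.card_fin,
    nsmul_eq_mul]
  ring

theorem stmt_4 (n : ℕ) (hn : 3 ≤ n) (μ a b p q : ℝ)
    (ha : 0 < a) (hb : 0 < b) (hq : 1 ≤ q)
    (hμ1 : max (-a) (-b) < μ) (hμ2 : μ < 0)
    (hp : 0 ≤ p) (hp2 : p < 4 / ((n : ℝ) - 1) * (1 - μ / max (-a) (-b))) :
    ¬ ∃ v : EuclideanSpace ℝ (Fin n) → ℝ, ContDiff ℝ (⊤ : ℕ∞) v ∧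
        (∀ x, 0 < v x) ∧
        (∀ x, lap v x + μ * v x + a * v x ^ (p + 1) + b * v x ^ (1 - q) = 0) := by
  rintro ⟨v, hv, hpos, heq⟩
  set c := μ + min a b with hc
  have hc0 : 0 < c := by
    rw [max_neg_neg] at hμ1
    have := hμ1
    simp only [hc]
    linarith
  -- pointwise differential inequality : lap v ≤ -c everywhere
  have hpt : ∀ x, lap v x ≤ -c := by
    intro x
    have ht0 : 0 < v x := hpos x
    set t := v x with ht
    have hkey : c ≤ μ * t + a * t ^ (p+1) + b * t ^ (1-q) := by
      rcases le_or_gt 1 t with h1 | h1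
      · have e1 : t ≤ t ^ (p+1) := by
          calc t = t ^ (1:ℝ) := (rpow_one t).symm
          _ ≤ t ^ (p+1) := rpow_le_rpow_of_exponent_le h1 (by linarith)
        have e2 : 0 < t ^ (1-q) := rpow_pos_of_pos ht0 _
        have hma : -a < μ := lt_of_le_of_lt (le_max_left _ _) hμ1
        have hmin : min a b ≤ a := min_le_left _ _
        nlinarith [mul_le_mul_of_nonneg_left e1 ha.le,
          mul_nonneg (by linarith : (0:ℝ) ≤ μ + a) (by linarith : (0:ℝ) ≤ t - 1),
          mul_pos hb e2]
      · have e1 : (1:ℝ) ≤ t ^ (1-q) := by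
          calc (1:ℝ) = t ^ (0:ℝ) := (rpow_zero t).symm
          _ ≤ t ^ (1-q) := rpow_le_rpow_of_exponent_ge ht0 h1.le (by linarith)
        have e2 : 0 < t ^ (p+1) := rpow_pos_of_pos ht0 _
        have hmb : -b < μ := lt_of_le_of_lt (le_max_right _ _) hμ1
        have hmin : min a b ≤ b := min_le_right _ _
        nlinarith [mul_le_mul_of_nonneg_left e1 hb.le,
          mul_nonneg (by linarith : (0:ℝ) ≤ -μ) (by linarith : (0:ℝ) ≤ 1 - t),
          mul_pos ha e2]
    have := heq x
    linarith
  have hn0 : (0:ℝ) < n := by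
    have : (3:ℝ) ≤ (n:ℝ) := by exact_mod_cast hn
    linarith
  set d := c / (4 * n) with hd
  have hd0 : 0 < d := div_pos hc0 (by linarith)
  set u := fun y : EuclideanSpace ℝ (Fin n) => v y + d * ‖y‖ ^ 2 with hu
  have huc : ContDiff ℝ (⊤ : ℕ∞) u := hv.add (contDiff_const.mul (contDiff_norm_sq ℝ))
  have h2dn : 2 * d * (n:ℝ) = c / 2 := by
    rw [hd]; field_simp; ring
  have hlapu : ∀ x, lap u x ≤ -(c/2) := by
    intro x
    have := lap_add_sq v hv d x
    rw [← hu] at this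
    rw [this, h2dn]
    linarith [hpt x]
  have hcoer : ∀ x, d * ‖x‖ ^ 2 < u x := by
    intro x
    simp only [hu]
    linarith [hpos x]
  have hu0 : 0 < u 0 := by
    have := hcoer 0
    simp at this
    simpa using lt_of_le_of_lt (by positivity) (hcoer 0)
  set R := Real.sqrt (u 0 / d) + 1 with hR
  have hs0 : 0 ≤ Real.sqrt (u 0 / d) := Real.sqrt_nonneg _
  have hR0 : 0 ≤ R := by rw [hR]; linarith
  have hsq : Real.sqrt (u 0 / d) ^ 2 = u 0 / d := Real.sq_sqrt (by positivity)
  have hR1 : u 0 < d * R ^ 2 := by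
    have hlt : u 0 / d < R ^ 2 := by
      rw [hR]
      nlinarith [hsq]
    calc u 0 = d * (u 0 / d) := by field_simp
    _ < d * R ^ 2 := by exact mul_lt_mul_of_pos_left hlt hd0
  obtain ⟨x₀, hx₀mem, hx₀min⟩ :=
    (isCompact_closedBall (0 : EuclideanSpace ℝ (Fin n)) R).exists_isMinOn
      ⟨0, Metric.mem_closedBall_self hR0⟩ huc.continuous.continuousOn
  have hglobal : ∀ x, u x₀ ≤ u x := by
    intro x
    rcases le_or_gt ‖x‖ R with hxR | hxR
    · exact isMinOn_iff.mp hx₀min x (mem_closedBall_zero_iff.mpr hxR)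
    · have h1 : u x₀ ≤ u 0 := isMinOn_iff.mp hx₀min 0 (Metric.mem_closedBall_self hR0)
      have h2 : d * R ^ 2 ≤ d * ‖x‖ ^ 2 := by
        have : R ^ 2 ≤ ‖x‖ ^ 2 := by nlinarith [norm_nonneg x]
        exact mul_le_mul_of_nonneg_left this hd0.le
      linarith [hcoer x, hR1]
  have hnn : 0 ≤ lap u x₀ := by
    unfold lap
    exact Finset.sum_nonneg fun i _ => secder_nonneg u huc x₀ hglobal _
  linarith [hlapu x₀, hnn, hc0]
end

section
/- Let n ≥ 3 be an integer and let μ, a, b be real constants satisfying one of the following: (1) a = 0, μ ≥ 0, b ≥ 0 and μ + b ≠ 0; (2) a < 0 and μ = b = 0. Then there is no smooth function v : ℝⁿ → ℝ with v > 0 everywhere satisfying the Einstein-scalar field Lichnerowicz-type equation Δv + μ·v + a·v^{(n+2)/(n−2)} + b·v^{−(3n−2)/(n−2)} = 0 on all of ℝⁿ. (This is the Euclidean case of Theorem 4.) -/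
open Real

open Filter

section
variable {n : ℕ}
local notation "E" => EuclideanSpace ℝ (Fin n)


lemma second_deriv_nonneg_of_isLocalMin (f g h : ℝ → ℝ) {ε : ℝ} (hε : 0 < ε)
    (hf : ∀ t, |t| < ε → HasDerivAt f (g t) t)
    (hg : ∀ t, |t| < ε → HasDerivAt g (h t) t)
    (hh : ContinuousAt h 0)
    (hmin : IsLocalMin f 0) : 0 ≤ h 0 := by
  by_contra hlt
  push_neg at hlt
  -- find δ with h < 0 on [-δ, δ] ⊆ (-ε, ε)
  have hev : ∀ᶠ t in nhds (0:ℝ), h t < 0 := hh.eventually_lt_const hlt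
  obtain ⟨δ₀, hδ₀, hball⟩ := Metric.eventually_nhds_iff_ball.1 hev
  set δ := min (δ₀ / 2) (ε / 2) with hδdef
  have hδpos : 0 < δ := lt_min (by linarith) (by linarith)
  have hδε : ∀ t, t ∈ Set.Icc (0:ℝ) δ → |t| < ε := by
    intro t ht
    rw [abs_lt]
    constructor
    · linarith [ht.1]
    · have := ht.2; have : t ≤ ε / 2 := le_trans this (min_le_right _ _); linarith
  have hδ₀' : ∀ t, t ∈ Set.Icc (0:ℝ) δ → h t < 0 := by
    intro t ht
    apply hball
    rw [Metric.mem_ball, Real.dist_eq, sub_zero]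
    have h1 : |t| = t := abs_of_nonneg ht.1
    rw [h1]
    exact lt_of_le_of_lt (le_trans ht.2 (min_le_left _ _)) (by linarith)
  have hg0 : g 0 = 0 := hmin.hasDerivAt_eq_zero (hf 0 (by simpa using hε))
  -- g strictly decreasing on [0, δ]
  have hganti : StrictAntiOn g (Set.Icc 0 δ) := by
    apply strictAntiOn_of_deriv_neg (convex_Icc 0 δ)
    · intro t ht
      exact ((hg t (hδε t ht)).continuousAt).continuousWithinAt
    · intro t ht
      rw [interior_Icc] at ht
      rw [(hg t (hδε t (Set.mem_Icc_of_Ioo ht))).deriv]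
      exact hδ₀' t (Set.mem_Icc_of_Ioo ht)
  have hgneg : ∀ t, t ∈ Set.Ioc (0:ℝ) δ → g t < 0 := by
    intro t ht
    have := hganti (Set.left_mem_Icc.2 hδpos.le) (Set.mem_Icc_of_Ioc ht) ht.1
    rwa [hg0] at this
  -- f strictly decreasing on [0, δ]
  have hfanti : StrictAntiOn f (Set.Icc 0 δ) := by
    apply strictAntiOn_of_deriv_neg (convex_Icc 0 δ)
    · intro t ht
      exact ((hf t (hδε t ht)).continuousAt).continuousWithinAt
    · intro t ht
      rw [interior_Icc] at ht
      rw [(hf t (hδε t (Set.mem_Icc_of_Ioo ht))).deriv]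
      exact hgneg t ⟨ht.1, ht.2.le⟩
  -- contradiction with local min
  obtain ⟨η, hη, hmin'⟩ := Metric.eventually_nhds_iff_ball.1 hmin
  set t := min (δ/2) (η/2) with htdef
  have htpos : 0 < t := lt_min (by linarith) (by linarith)
  have h1 : f t < f 0 :=
    hfanti (Set.left_mem_Icc.2 hδpos.le)
      ⟨htpos.le, le_trans (min_le_left _ _) (by linarith)⟩ htpos
  have h2 : f 0 ≤ f t := by
    apply hmin'
    rw [Metric.mem_ball, Real.dist_eq, sub_zero, abs_of_nonneg htpos.le]
    exact lt_of_le_of_lt (min_le_right _ _) (by linarith)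
  linarith

lemma diffAt_fderiv_apply {f : E → ℝ} {U : Set E} (hUo : IsOpen U)
    (hf : ContDiffOn ℝ 2 f U) {x : E} (hx : x ∈ U) (w : E) :
    DifferentiableAt ℝ (fun y => fderiv ℝ f y w) x := by
  have h1 : ContDiffOn ℝ 1 (fderiv ℝ f) U := hf.fderiv_of_isOpen hUo (by norm_num)
  have h2 : DifferentiableAt ℝ (fderiv ℝ f) x :=
    (h1.differentiableOn (by norm_num)).differentiableAt (hUo.mem_nhds hx)
  exact (ContinuousLinearMap.apply ℝ ℝ w).differentiableAt.comp x h2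

lemma lap_nonneg_of_isLocalMin {h : E → ℝ} {x₀ : E} {U : Set E} (hUo : IsOpen U)
    (hx₀ : x₀ ∈ U) (hh : ContDiffOn ℝ 2 h U) (hmin : IsLocalMin h x₀) :
    0 ≤ lap h x₀ := by
  have hdiff : ∀ y ∈ U, DifferentiableAt ℝ h y := fun y hy =>
    (hh.differentiableOn (by norm_num)).differentiableAt (hUo.mem_nhds hy)
  apply Finset.sum_nonneg
  intro i _
  set w : E := EuclideanSpace.single i 1 with hw
  set A : E → ℝ := fun y => fderiv ℝ h y w with hA
  set γ : ℝ → E := fun t => x₀ + t • w with hγ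
  have hγ0 : γ 0 = x₀ := by simp [hγ]
  have hγc : Continuous γ := by continuity
  have hγd : ∀ t : ℝ, HasDerivAt γ w t := by
    intro t
    exact (by simpa using ((hasDerivAt_id t).smul_const w) :
      HasDerivAt (fun s : ℝ => s • w) w t).const_add x₀
  -- ε-ball around 0 mapped into U
  have hVo : IsOpen (γ ⁻¹' U) := hUo.preimage hγc
  have h0V : (0:ℝ) ∈ γ ⁻¹' U := by simp [hγ0, hx₀]
  obtain ⟨ε, hε, hball⟩ := Metric.isOpen_iff.1 hVo 0 h0V
  have hmem : ∀ t : ℝ, |t| < ε → γ t ∈ U := by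
    intro t ht
    exact hball (by simpa [Real.dist_eq] using ht)
  -- derivative data
  have hfd : ∀ t : ℝ, |t| < ε → HasDerivAt (fun s => h (γ s)) (A (γ t)) t := by
    intro t ht
    exact ((hdiff (γ t) (hmem t ht)).hasFDerivAt).comp_hasDerivAt t (hγd t)
  have hAdiff : ∀ y ∈ U, DifferentiableAt ℝ A y := fun y hy =>
    diffAt_fderiv_apply hUo hh hy w
  have hgd : ∀ t : ℝ, |t| < ε →
      HasDerivAt (fun s => A (γ s)) (fderiv ℝ A (γ t) w) t := by
    intro t ht
    exact ((hAdiff (γ t) (hmem t ht)).hasFDerivAt).comp_hasDerivAt t (hγd t)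
  -- continuity of second derivative along the line
  have hAC1 : ContDiffOn ℝ 1 A U := by
    have h1 : ContDiffOn ℝ 1 (fderiv ℝ h) U := hh.fderiv_of_isOpen hUo (by norm_num)
    exact (ContinuousLinearMap.apply ℝ ℝ w).contDiff.comp_contDiffOn h1
  have hcont : ContinuousAt (fun t : ℝ => fderiv ℝ A (γ t) w) 0 := by
    have h1 : ContinuousOn (fderiv ℝ A) U :=
      hAC1.continuousOn_fderiv_of_isOpen hUo le_rfl
    have h2 : ContinuousAt (fderiv ℝ A) x₀ := h1.continuousAt (hUo.mem_nhds hx₀)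
    have h3 : ContinuousAt (fun y => fderiv ℝ A y w) x₀ :=
      ((ContinuousLinearMap.apply ℝ ℝ w).continuous.continuousAt).comp h2
    have h4 : ContinuousAt (fun y => fderiv ℝ A y w) (γ 0) := by rwa [hγ0]
    exact h4.comp hγc.continuousAt
  -- local min along line
  have hlmin : IsLocalMin (fun s => h (γ s)) 0 := by
    have ht : Tendsto γ (nhds 0) (nhds x₀) := by
      have := hγc.continuousAt (x := (0:ℝ))
      rwa [ContinuousAt, hγ0] at this
    have := ht.eventually hmin
    simpa [IsLocalMin, IsMinFilter, hγ0] using this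
  have := second_deriv_nonneg_of_isLocalMin (fun s => h (γ s)) (fun s => A (γ s))
    (fun t => fderiv ℝ A (γ t) w) hε hfd hgd hcont hlmin
  simpa [hγ0] using this

lemma hasFDerivAt_inner_self (y : E) :
    HasFDerivAt (fun z : E => (inner ℝ z z : ℝ)) ((2:ℝ) • (innerSL ℝ y)) y := by
  have h := (hasFDerivAt_id y).inner ℝ (hasFDerivAt_id y)
  refine h.congr_fderiv ?_
  ext w
  simp [fderivInnerCLM_apply, real_inner_comm, two_smul, mul_comm]

lemma lap_radial (F F1 F2 : ℝ → ℝ) {U : Set ℝ} (hU : IsOpen U)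
    (hF : ∀ t ∈ U, HasDerivAt F (F1 t) t) (hF1 : ∀ t ∈ U, HasDerivAt F1 (F2 t) t)
    (x : E) (hx : (inner ℝ x x : ℝ) ∈ U) :
    lap (fun y : E => F (inner ℝ y y : ℝ)) x
      = 2*n*F1 (inner ℝ x x : ℝ) + 4*(inner ℝ x x : ℝ)*F2 (inner ℝ x x : ℝ) := by
  have hVo : IsOpen ((fun y : E => (inner ℝ y y : ℝ)) ⁻¹' U) := by
    have : Continuous (fun y : E => (inner ℝ y y : ℝ)) :=
      continuous_inner.comp (continuous_id.prodMk continuous_id)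
    exact hU.preimage this
  have hterm : ∀ i : Fin n,
      fderiv ℝ (fun y => fderiv ℝ (fun z : E => F (inner ℝ z z : ℝ)) y
          (EuclideanSpace.single i 1)) x (EuclideanSpace.single i 1)
      = 2 * F1 (inner ℝ x x : ℝ) + 4 * (x i)^2 * F2 (inner ℝ x x : ℝ) := by
    intro i
    set w : E := EuclideanSpace.single i 1 with hw
    have hww : (inner ℝ w w : ℝ) = 1 := by
      simp [hw, EuclideanSpace.inner_single_left]
    have hwx : ∀ y : E, (inner ℝ w y : ℝ) = y i := by
      intro y; simp [hw, EuclideanSpace.inner_single_left]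
    have hxw : ∀ y : E, (inner ℝ y w : ℝ) = y i := by
      intro y; rw [real_inner_comm]; exact hwx y
    have hEv : (fun y => fderiv ℝ (fun z : E => F (inner ℝ z z : ℝ)) y w)
        =ᶠ[nhds x] (fun y => F1 (inner ℝ y y : ℝ) * ((2:ℝ) * (inner ℝ w y : ℝ))) := by
      filter_upwards [hVo.mem_nhds hx] with y hy
      have hcomp : HasFDerivAt (fun z : E => F (inner ℝ z z : ℝ))
          (F1 (inner ℝ y y : ℝ) • ((2:ℝ) • innerSL ℝ y)) y :=
        HasDerivAt.comp_hasFDerivAt (f := fun z : E => (inner ℝ z z : ℝ)) y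
          (hF _ hy) (hasFDerivAt_inner_self y)
      rw [hcomp.fderiv]
      simp only [ContinuousLinearMap.coe_smul', Pi.smul_apply, innerSL_apply_apply,
        smul_eq_mul]
      rw [real_inner_comm y w]
    rw [hEv.fderiv_eq]
    have hP : HasFDerivAt (fun y : E => F1 (inner ℝ y y : ℝ))
        (F2 (inner ℝ x x : ℝ) • ((2:ℝ) • innerSL ℝ x)) x :=
      HasDerivAt.comp_hasFDerivAt (f := fun z : E => (inner ℝ z z : ℝ)) x
        (hF1 _ hx) (hasFDerivAt_inner_self x)
    have hQ : HasFDerivAt (fun y : E => (2:ℝ) * (inner ℝ w y : ℝ))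
        ((2:ℝ) • (innerSL ℝ w)) x :=
      ((innerSL ℝ w).hasFDerivAt).const_mul (2:ℝ)
    have hprod := hP.mul hQ
    rw [HasFDerivAt.fderiv (f := fun y => F1 (inner ℝ y y : ℝ) * ((2:ℝ) * (inner ℝ w y : ℝ))) hprod]
    simp only [ContinuousLinearMap.add_apply, ContinuousLinearMap.coe_smul',
      Pi.smul_apply, innerSL_apply_apply, smul_eq_mul]
    rw [hww, hwx x, hxw x]
    ring
  have hsum : ∑ i, (x i)^2 = (inner ℝ x x : ℝ) := by
    rw [real_inner_self_eq_norm_sq, EuclideanSpace.norm_sq_eq]; simp only [Real.norm_eq_abs, sq_abs]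
  unfold lap
  rw [Finset.sum_congr rfl (fun i _ => hterm i), Finset.sum_add_distrib,
    Finset.sum_const]
  have h2 : ∀ i : Fin n, 4 * (x i)^2 * F2 (inner ℝ x x : ℝ)
      = (x i)^2 * (4 * F2 (inner ℝ x x : ℝ)) := fun i => by ring
  rw [Finset.sum_congr rfl (fun i _ => h2 i), ← Finset.sum_mul, hsum,
    nsmul_eq_mul]
  rw [Finset.card_univ, Fintype.card_fin]
  ring

lemma lap_sub_const_mul {f g : E → ℝ} {U : Set E} (hUo : IsOpen U)
    (hf : ContDiffOn ℝ 2 f U) (hg : ContDiffOn ℝ 2 g U) (c : ℝ) {x : E}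
    (hx : x ∈ U) :
    lap (fun y => f y - c * g y) x = lap f x - c * lap g x := by
  have hfd : ∀ y ∈ U, DifferentiableAt ℝ f y := fun y hy =>
    (hf.differentiableOn (by norm_num)).differentiableAt (hUo.mem_nhds hy)
  have hgd : ∀ y ∈ U, DifferentiableAt ℝ g y := fun y hy =>
    (hg.differentiableOn (by norm_num)).differentiableAt (hUo.mem_nhds hy)
  have hterm : ∀ w : E,
      fderiv ℝ (fun y => fderiv ℝ (fun z => f z - c * g z) y w) x w
      = fderiv ℝ (fun y => fderiv ℝ f y w) x w
        - c * fderiv ℝ (fun y => fderiv ℝ g y w) x w := by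
    intro w
    have hEv : (fun y => fderiv ℝ (fun z => f z - c * g z) y w)
        =ᶠ[nhds x] (fun y => fderiv ℝ f y w - c * fderiv ℝ g y w) := by
      filter_upwards [hUo.mem_nhds hx] with y hy
      rw [fderiv_fun_sub (hfd y hy) ((hgd y hy).const_mul c),
        fderiv_const_mul (hgd y hy)]
      simp
    rw [hEv.fderiv_eq,
      fderiv_fun_sub (diffAt_fderiv_apply hUo hf hx w)
        ((diffAt_fderiv_apply hUo hg hx w).const_mul c),
      fderiv_const_mul (diffAt_fderiv_apply hUo hg hx w)]
    simp
  unfold lap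
  rw [Finset.sum_congr rfl (fun i _ => hterm (EuclideanSpace.single i 1)),
    Finset.sum_sub_distrib, ← Finset.mul_sum]


lemma lap_sub {f g : E → ℝ} {U : Set E} (hUo : IsOpen U)
    (hf : ContDiffOn ℝ 2 f U) (hg : ContDiffOn ℝ 2 g U) {x : E}
    (hx : x ∈ U) :
    lap (fun y => f y - g y) x = lap f x - lap g x := by
  have hfd : ∀ y ∈ U, DifferentiableAt ℝ f y := fun y hy =>
    (hf.differentiableOn (by norm_num)).differentiableAt (hUo.mem_nhds hy)
  have hgd : ∀ y ∈ U, DifferentiableAt ℝ g y := fun y hy =>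
    (hg.differentiableOn (by norm_num)).differentiableAt (hUo.mem_nhds hy)
  have hterm : ∀ w : E,
      fderiv ℝ (fun y => fderiv ℝ (fun z => f z - g z) y w) x w
      = fderiv ℝ (fun y => fderiv ℝ f y w) x w
        - fderiv ℝ (fun y => fderiv ℝ g y w) x w := by
    intro w
    have hEv : (fun y => fderiv ℝ (fun z => f z - g z) y w)
        =ᶠ[nhds x] (fun y => fderiv ℝ f y w - fderiv ℝ g y w) := by
      filter_upwards [hUo.mem_nhds hx] with y hy
      rw [fderiv_fun_sub (hfd y hy) (hgd y hy)]
      simp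
    rw [hEv.fderiv_eq,
      fderiv_fun_sub (diffAt_fderiv_apply hUo hf hx w)
        (diffAt_fderiv_apply hUo hg hx w)]
    simp
  unfold lap
  rw [Finset.sum_congr rfl (fun i _ => hterm (EuclideanSpace.single i 1)),
    Finset.sum_sub_distrib]


-- key real inequality for the case-1 barrier
lemma bar1_key (m : ℕ) (ε ω u t : ℝ) (hε : 0 < ε)
    (hω2 : ω^2 = ε/(4*((m:ℝ)+2)^2))
    (hu0 : 0 ≤ u) (hu1 : u ≤ 1) (hut : u = 1 - ω^2*t) :
    -(ε * u^(m+2)) ≤ 2*((m:ℝ)+2)*(-(((m:ℝ)+2)*ω^2)*u^(m+1))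
      + 4*t*(((m:ℝ)+2)*((m:ℝ)+1)*ω^4*u^m) := by
  have hm : (0:ℝ) ≤ (m:ℝ) := Nat.cast_nonneg m
  have h4 : t*ω^4 = ω^2*(1-u) := by
    rw [show t*ω^4 = (ω^2*t)*ω^2 from by ring, show ω^2*t = 1-u from by linarith]
    ring
  have hG : 0 ≤ ε*u^2 - 2*((m:ℝ)+2)^2*ω^2*u
      + 4*((m:ℝ)+2)*((m:ℝ)+1)*ω^2*(1-u) := by
    rw [hω2]
    have hN : (0:ℝ) < ((m:ℝ)+2)^2 := by positivity
    have key : 0 ≤ ((m:ℝ)+2)*u^2 - (((m:ℝ)+2)/2)*u + ((m:ℝ)+1)*(1-u) := by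
      nlinarith [sq_nonneg (u - 1/2), sq_nonneg (u - 3/4), hm, hε]
    have h2 : ε*u^2 - 2*((m:ℝ)+2)^2*(ε/(4*((m:ℝ)+2)^2))*u
        + 4*((m:ℝ)+2)*((m:ℝ)+1)*(ε/(4*((m:ℝ)+2)^2))*(1-u)
        = (ε/((m:ℝ)+2)) * (((m:ℝ)+2)*u^2 - (((m:ℝ)+2)/2)*u + ((m:ℝ)+1)*(1-u)) := by
      field_simp
      ring
    rw [h2]
    positivity
  have hexp : 2*((m:ℝ)+2)*(-(((m:ℝ)+2)*ω^2)*u^(m+1))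
      + 4*t*(((m:ℝ)+2)*((m:ℝ)+1)*ω^4*u^m) + ε*u^(m+2)
      = u^m * (ε*u^2 - 2*((m:ℝ)+2)^2*ω^2*u
        + 4*((m:ℝ)+2)*((m:ℝ)+1)*ω^2*(1-u)) := by
    rw [pow_succ, pow_succ, pow_succ]
    linear_combination (4*((m:ℝ)+2)*((m:ℝ)+1)*u^m)*h4
  have := mul_nonneg (pow_nonneg hu0 m) hG
  linarith [hexp ▸ this]

lemma sliding (hn : 2 ≤ n) (v : E → ℝ) (hv : ContDiff ℝ 2 v)
    (hpos : ∀ x, 0 < v x) (ε : ℝ) (hε : 0 < ε) :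
    ∃ x₀ : E, 0 < v x₀ ∧ v x₀ ≤ v 0 ∧ -(ε * v x₀) ≤ lap v x₀ := by
  obtain ⟨m, rfl⟩ : ∃ m, n = m + 2 := ⟨n - 2, by omega⟩
  set N : ℝ := (m:ℝ) + 2 with hN
  have hNpos : 0 < N := by positivity
  set ω : ℝ := Real.sqrt (ε/(4*N^2)) with hωdef
  have hω2 : ω^2 = ε/(4*N^2) := Real.sq_sqrt (by positivity)
  have hωpos : 0 < ω := Real.sqrt_pos.2 (by positivity)
  set F : ℝ → ℝ := fun t => (1 - ω^2*t)^(m+2) with hF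
  set F1 : ℝ → ℝ := fun t => -(N*ω^2)*(1 - ω^2*t)^(m+1) with hF1
  set F2 : ℝ → ℝ := fun t => N*((m:ℝ)+1)*ω^4*(1 - ω^2*t)^m with hF2
  have hu : ∀ t : ℝ, HasDerivAt (fun s : ℝ => 1 - ω^2*s) (-(ω^2)) t := by
    intro t
    simpa using ((hasDerivAt_id t).const_mul (ω^2)).const_sub (1:ℝ)
  have hFd : ∀ t : ℝ, HasDerivAt F (F1 t) t := by
    intro t
    have h := (hu t).pow (m+2)
    have h2 : (↑(m+2):ℝ) * (1 - ω^2*t)^(m+2-1) * (-(ω^2)) = F1 t := by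
      simp only [hF1, hN, show m+2-1 = m+1 from rfl]
      push_cast
      ring
    rw [h2] at h
    exact h
  have hF1d : ∀ t : ℝ, HasDerivAt F1 (F2 t) t := by
    intro t
    have h := ((hu t).pow (m+1)).const_mul (-(N*ω^2))
    have h2 : -(N*ω^2) * ((↑(m+1):ℝ) * (1 - ω^2*t)^(m+1-1) * (-(ω^2))) = F2 t := by
      simp only [hF1, hF2, hN, show m+1-1 = m from rfl]
      push_cast
      ring
    rw [h2] at h
    exact h
  set ψ := fun y : EuclideanSpace ℝ (Fin (m+2)) => F ((inner ℝ y y : ℝ)) with hψ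
  have hsmooth : ContDiff ℝ 2 ψ := by
    have hS : ContDiff ℝ 2 (fun y : EuclideanSpace ℝ (Fin (m+2)) => (inner ℝ y y : ℝ)) :=
      contDiff_id.inner ℝ contDiff_id
    have hFc : ContDiff ℝ 2 F :=
      (contDiff_const.sub (contDiff_const.mul contDiff_id)).pow (m+2)
    exact hFc.comp hS
  -- basic facts about ψ on the closed ball Q of radius 1/ω
  set R : ℝ := 1/ω with hRdef
  have hRpos : 0 < R := by positivity
  set Q := Metric.closedBall (0 : EuclideanSpace ℝ (Fin (m+2))) R with hQ
  have hSnn : ∀ y : EuclideanSpace ℝ (Fin (m+2)), 0 ≤ (inner ℝ y y : ℝ) := fun y => real_inner_self_nonneg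
  have hSnorm : ∀ y : EuclideanSpace ℝ (Fin (m+2)), (inner ℝ y y : ℝ) = ‖y‖^2 := fun y =>
    real_inner_self_eq_norm_sq y
  have huQ : ∀ y ∈ Q, 0 ≤ 1 - ω^2 * (inner ℝ y y : ℝ) ∧ 1 - ω^2*(inner ℝ y y : ℝ) ≤ 1 := by
    intro y hy
    have h1 : ‖y‖ ≤ R := by simpa [hQ] using hy
    have h2 : (inner ℝ y y : ℝ) ≤ R^2 := by
      rw [hSnorm]
      exact pow_le_pow_left₀ (norm_nonneg y) h1 2
    have h3 : ω^2 * (inner ℝ y y : ℝ) ≤ ω^2 * R^2 := by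
      apply mul_le_mul_of_nonneg_left h2 (by positivity)
    have h4 : ω^2 * R^2 = 1 := by
      rw [hRdef]; field_simp
    constructor
    · nlinarith
    · nlinarith [mul_nonneg (sq_nonneg ω) (hSnn y)]
  have hψ01 : ∀ y ∈ Q, 0 ≤ ψ y ∧ ψ y ≤ 1 := by
    intro y hy
    obtain ⟨h0, h1⟩ := huQ y hy
    exact ⟨pow_nonneg h0 _, pow_le_one₀ h0 h1⟩
  have hψ0 : ψ 0 = 1 := by
    simp [hψ, hF]
  have h0Q : (0:EuclideanSpace ℝ (Fin (m+2))) ∈ Q := Metric.mem_closedBall_self hRpos.le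
  -- the touching constant θ
  set T : Set ℝ := {t : ℝ | 0 ≤ t ∧ ∀ y ∈ Q, t * ψ y ≤ v y} with hT
  have hT0 : (0:ℝ) ∈ T := ⟨le_refl 0, fun y hy => by simpa using (hpos y).le⟩
  have hTne : T.Nonempty := ⟨0, hT0⟩
  have hTbdd : BddAbove T := by
    refine ⟨v 0, fun t ht => ?_⟩
    have := ht.2 0 h0Q
    rwa [hψ0, mul_one] at this
  set θ : ℝ := sSup T with hθ
  have hθ0 : 0 ≤ θ := le_csSup hTbdd hT0
  have hθv0 : θ ≤ v 0 := csSup_le hTne (fun t ht => by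
    have := ht.2 0 h0Q; rwa [hψ0, mul_one] at this)
  -- θ is positive: the min of v on Q is in T
  have hQc : IsCompact Q := isCompact_closedBall 0 R
  have hQne : Q.Nonempty := ⟨0, h0Q⟩
  obtain ⟨z, hzQ, hzmin'⟩ := hQc.exists_isMinOn hQne (hv.continuous.continuousOn)
  have hzmin := isMinOn_iff.1 hzmin'
  have hzT : v z ∈ T := by
    refine ⟨(hpos z).le, fun y hy => ?_⟩
    obtain ⟨h0, h1⟩ := hψ01 y hy
    calc v z * ψ y ≤ v z * 1 := by
          exact mul_le_mul_of_nonneg_left h1 (hpos z).le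
      _ = v z := mul_one _
      _ ≤ v y := hzmin y hy
  have hθpos : 0 < θ := lt_of_lt_of_le (hpos z) (le_csSup hTbdd hzT)
  -- θ is in T
  have hθT : ∀ y ∈ Q, θ * ψ y ≤ v y := by
    intro y hy
    obtain ⟨h0, h1⟩ := hψ01 y hy
    rcases eq_or_lt_of_le h0 with h|h
    · rw [← h, mul_zero]; exact (hpos y).le
    · have hub : θ ≤ v y / ψ y := csSup_le hTne (fun t ht => by
        rw [le_div_iff₀ h]
        exact ht.2 y hy)
      calc θ * ψ y ≤ (v y / ψ y) * ψ y := mul_le_mul_of_nonneg_right hub h0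
        _ = v y := by field_simp
  -- the touching point
  set g := fun y : EuclideanSpace ℝ (Fin (m+2)) => v y - θ * ψ y with hg
  have hgc : ContinuousOn g Q :=
    (hv.continuous.sub (continuous_const.mul hsmooth.continuous)).continuousOn
  obtain ⟨x₀, hx₀Q, hx₀min'⟩ := hQc.exists_isMinOn hQne hgc
  have hx₀min := isMinOn_iff.1 hx₀min'
  have hgnn : ∀ y ∈ Q, 0 ≤ g y := fun y hy => by
    have := hθT y hy; simp [hg]; linarith
  have hg0 : g x₀ = 0 := by
    by_contra hne
    have hδ : 0 < g x₀ := lt_of_le_of_ne (hgnn x₀ hx₀Q) (Ne.symm hne)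
    have : θ + g x₀ ∈ T := by
      refine ⟨by linarith, fun y hy => ?_⟩
      obtain ⟨h0, h1⟩ := hψ01 y hy
      have h2 : v x₀ - θ * ψ x₀ ≤ v y - θ * ψ y := hx₀min y hy
      have hδ' : (0:ℝ) < v x₀ - θ * ψ x₀ := hδ
      show (θ + (v x₀ - θ * ψ x₀)) * ψ y ≤ v y
      nlinarith [mul_le_mul_of_nonneg_left h1 hδ'.le, h2]
    have := le_csSup hTbdd this
    linarith
  have htouch : v x₀ = θ * ψ x₀ := by
    have : v x₀ - θ * ψ x₀ = 0 := hg0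
    linarith
  have hψx₀pos : 0 < ψ x₀ := by
    have h1 : 0 < θ * ψ x₀ := htouch ▸ hpos x₀
    nlinarith
  -- x₀ is interior
  have hx₀int : ‖x₀‖ < R := by
    rcases lt_or_eq_of_le (by simpa [hQ] using hx₀Q : ‖x₀‖ ≤ R) with h|h
    · exact h
    · exfalso
      have hu0 : 1 - ω^2*(inner ℝ x₀ x₀ : ℝ) = 0 := by
        rw [hSnorm, h, hRdef]
        field_simp
        norm_num
      have : ψ x₀ = 0 := by
        show ((1:ℝ) - ω^2*(inner ℝ x₀ x₀ : ℝ))^(m+2) = 0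
        rw [hu0]
        simp
      rw [this] at hψx₀pos
      exact lt_irrefl 0 hψx₀pos
  have hball : Metric.ball (0:EuclideanSpace ℝ (Fin (m+2))) R ∈ nhds x₀ :=
    (Metric.isOpen_ball).mem_nhds (by simpa using hx₀int)
  have hlmin : IsLocalMin g x₀ := by
    filter_upwards [hball] with y hy
    rw [hg0]
    exact hgnn y (Metric.ball_subset_closedBall hy)
  -- apply the second derivative test
  have hx₀ball : x₀ ∈ Metric.ball (0:EuclideanSpace ℝ (Fin (m+2))) R := by
    simpa using hx₀int
  have hgsm : ContDiff ℝ 2 g := by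
    rw [hg]
    exact hv.sub (contDiff_const.mul hsmooth)
  have hlap : 0 ≤ lap g x₀ :=
    lap_nonneg_of_isLocalMin Metric.isOpen_ball hx₀ball hgsm.contDiffOn hlmin
  have hlapsub : lap g x₀ = lap v x₀ - θ * lap ψ x₀ := by
    rw [hg]
    exact lap_sub_const_mul Metric.isOpen_ball hv.contDiffOn hsmooth.contDiffOn θ
      hx₀ball
  -- compute lap ψ x₀ and bound it
  have hlapψ : lap ψ x₀ = 2*((m:ℝ)+2)*F1 (inner ℝ x₀ x₀ : ℝ)
      + 4*(inner ℝ x₀ x₀ : ℝ)*F2 (inner ℝ x₀ x₀ : ℝ) := by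
    have := lap_radial F F1 F2 isOpen_univ (fun t _ => hFd t) (fun t _ => hF1d t)
      x₀ (Set.mem_univ _)
    rw [this]
    push_cast
    ring
  have hψbd : -(ε * ψ x₀) ≤ lap ψ x₀ := by
    obtain ⟨h0, h1⟩ := huQ x₀ hx₀Q
    have := bar1_key m ε ω (1 - ω^2*(inner ℝ x₀ x₀ : ℝ)) (inner ℝ x₀ x₀ : ℝ) hε
      (by rw [hω2, hN]) h0 h1 rfl
    rw [hlapψ]
    rw [hψ, hF]
    rw [hF1, hF2] at *
    convert this using 2
  refine ⟨x₀, hpos x₀, ?_, ?_⟩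
  · calc v x₀ = θ * ψ x₀ := htouch
      _ ≤ θ * 1 := mul_le_mul_of_nonneg_left (hψ01 x₀ hx₀Q).2 hθ0
      _ = θ := mul_one θ
      _ ≤ v 0 := hθv0
  · have h1 : lap v x₀ = lap g x₀ + θ * lap ψ x₀ := by rw [hlapsub]; ring
    have h2 : θ * (-(ε * ψ x₀)) ≤ θ * lap ψ x₀ :=
      mul_le_mul_of_nonneg_left hψbd hθ0
    have h3 : θ * (-(ε * ψ x₀)) = -(ε * v x₀) := by rw [htouch]; ring
    linarith
lemma case1 (hn : 2 ≤ n) (μ b en : ℝ) (hμ : 0 ≤ μ) (hb : 0 ≤ b) (hμb : μ + b ≠ 0)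
    (hen : en < 0) (v : E → ℝ) (hv : ContDiff ℝ 2 v) (hpos : ∀ x, 0 < v x)
    (heq : ∀ x, lap v x + μ * v x + b * v x ^ en = 0) : False := by
  set M : ℝ := v 0 with hM
  have hMpos : 0 < M := hpos 0
  set c₀ : ℝ := μ + b * M ^ (en - 1) with hc₀
  have hMen : 0 < M ^ (en - 1) := Real.rpow_pos_of_pos hMpos _
  have hc₀pos : 0 < c₀ := by
    rcases eq_or_lt_of_le hμ with h|h
    · have hbne : b ≠ 0 := by
        intro hb0; apply hμb; rw [← h, hb0]; ring
      have hbpos : 0 < b := lt_of_le_of_ne hb (Ne.symm hbne)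
      rw [hc₀, ← h]
      positivity
    · rw [hc₀]
      positivity
  obtain ⟨x₀, hvx₀, hle, hlapge⟩ := sliding hn v hv hpos (c₀/2) (by positivity)
  have h1 : v x₀ ^ en = v x₀ ^ (en - 1) * v x₀ := by
    rw [← Real.rpow_add_one (ne_of_gt (hpos x₀)) (en - 1)]
    norm_num
  have h2 : M ^ (en - 1) ≤ v x₀ ^ (en - 1) :=
    Real.rpow_le_rpow_of_nonpos (hpos x₀) hle (by linarith)
  have h3 : b * (M ^ (en - 1) * v x₀) ≤ b * (v x₀ ^ (en - 1) * v x₀) :=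
    mul_le_mul_of_nonneg_left
      (mul_le_mul_of_nonneg_right h2 (hpos x₀).le) hb
  have h4 : lap v x₀ = -(μ * v x₀) - b * v x₀ ^ en := by
    have := heq x₀; linarith
  rw [h4] at hlapge
  rw [h1] at hlapge
  have h5 : μ * v x₀ + b * (M ^ (en - 1) * v x₀) ≤ c₀/2 * v x₀ := by
    nlinarith
  have h6 : c₀ * v x₀ ≤ c₀/2 * v x₀ := by
    rw [hc₀]; nlinarith
  nlinarith

set_option maxHeartbeats 2000000 in
lemma case2 (hn : 3 ≤ n) (c p : ℝ) (hc : 0 < c)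
    (hp : p = ((n:ℝ)+2)/((n:ℝ)-2)) (v : E → ℝ) (hv : ContDiff ℝ 2 v)
    (hpos : ∀ x, 0 < v x) (heq : ∀ x, lap v x = c * v x ^ p) : False := by
  have hNR3 : (3:ℝ) ≤ (n:ℝ) := by exact_mod_cast hn
  have hNR2 : (0:ℝ) < (n:ℝ) - 2 := by linarith
  set α : ℝ := ((n:ℝ)-2)/2 with hα
  set κ : ℝ := ((n:ℝ)-2)/4 with hκ
  have hαpos : 0 < α := by rw [hα]; linarith
  have hκpos : 0 < κ := by rw [hκ]; linarith
  have hp1 : p - 1 = 4/((n:ℝ)-2) := by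
    rw [hp]; field_simp; ring
  have hppos : 0 < p := by rw [hp]; positivity
  set B₀ : ℝ := 2*(n:ℝ)*((n:ℝ)-2)/c with hB₀
  have hB₀pos : 0 < B₀ := by rw [hB₀]; positivity
  set D : ℝ := B₀ ^ κ with hD
  have hDpos : 0 < D := Real.rpow_pos_of_pos hB₀pos κ
  have hv0 : 0 < v 0 := hpos 0
  set ρ : ℝ := (D/(v 0)+1) ^ (1/κ) with hρ
  have hbase : 0 < D/(v 0)+1 := by positivity
  have hρpos : 0 < ρ := Real.rpow_pos_of_pos hbase _
  have hρκ : ρ ^ κ = D/(v 0)+1 := by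
    rw [hρ, ← Real.rpow_mul hbase.le, one_div, inv_mul_cancel₀ hκpos.ne',
      Real.rpow_one]
  set C : ℝ := (B₀*ρ) ^ κ with hC
  have hCpos : 0 < C := Real.rpow_pos_of_pos (by positivity) κ
  have hCp1 : C ^ (p-1) = B₀*ρ := by
    rw [hC, ← Real.rpow_mul (by positivity : (0:ℝ) ≤ B₀*ρ),
      show κ*(p-1) = 1 by rw [hp1, hκ]; field_simp, Real.rpow_one]
  -- the barrier
  set F : ℝ → ℝ := fun t => C * (ρ - t) ^ (-α) with hF
  set F1 : ℝ → ℝ := fun t => (C*α) * (ρ - t) ^ (-α-1) with hF1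
  set F2 : ℝ → ℝ := fun t => (C*α*(α+1)) * (ρ - t) ^ (-α-1-1) with hF2
  have hsub : ∀ t : ℝ, HasDerivAt (fun s : ℝ => ρ - s) (-1) t := by
    intro t
    exact (hasDerivAt_id t).const_sub ρ
  have hFd : ∀ t ∈ Set.Iio ρ, HasDerivAt F (F1 t) t := by
    intro t ht
    have hne : ρ - t ≠ 0 := by simp only [Set.mem_Iio] at ht; intro h; linarith
    have h := ((hsub t).rpow_const (p := -α) (Or.inl hne)).const_mul C
    have h2 : C * (-1 * -α * (ρ - t) ^ (-α-1)) = F1 t := by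
      simp only [hF1]; ring
    rw [h2] at h
    exact h
  have hF1d : ∀ t ∈ Set.Iio ρ, HasDerivAt F1 (F2 t) t := by
    intro t ht
    have hne : ρ - t ≠ 0 := by simp only [Set.mem_Iio] at ht; intro h; linarith
    have h := ((hsub t).rpow_const (p := -α-1) (Or.inl hne)).const_mul (C*α)
    have h2 : C*α * (-1 * (-α-1) * (ρ - t) ^ (-α-1-1)) = F2 t := by
      simp only [hF2]; ring
    rw [h2] at h
    exact h
  set β := fun y : E => F ((inner ℝ y y : ℝ)) with hβ
  have hSnn : ∀ y : E, 0 ≤ (inner ℝ y y : ℝ) := fun y => real_inner_self_nonneg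
  have hSnorm : ∀ y : E, (inner ℝ y y : ℝ) = ‖y‖^2 := fun y =>
    real_inner_self_eq_norm_sq y
  have hScont : ContDiff ℝ 2 (fun y : E => (inner ℝ y y : ℝ)) :=
    contDiff_id.inner ℝ contDiff_id
  -- smoothness of β on V = {S < ρ}
  set V : Set E := {y : E | (inner ℝ y y : ℝ) < ρ} with hV
  have hVo : IsOpen V := by
    have : Continuous (fun y : E => (inner ℝ y y : ℝ)) := hScont.continuous
    exact isOpen_Iio.preimage this
  have hFcd : ContDiffOn ℝ 2 F (Set.Iio ρ) := by
    intro t ht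
    have hne : ρ - t ≠ 0 := by
      simp only [Set.mem_Iio] at ht; intro h; linarith
    have h1 : ContDiffAt ℝ 2 (fun s : ℝ => (ρ - s) ^ (-α)) t := by
      exact (Real.contDiffAt_rpow_const_of_ne hne).comp t
        ((contDiff_const.sub contDiff_id).contDiffAt)
    exact ((h1.const_smul C).contDiffWithinAt).congr (fun y _ => by
      simp [hF, smul_eq_mul]) (by simp [hF, smul_eq_mul])
  have hβcd : ContDiffOn ℝ 2 β V := by
    have hmap : Set.MapsTo (fun y : E => (inner ℝ y y : ℝ)) V (Set.Iio ρ) :=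
      fun y hy => hy
    exact hFcd.comp (hScont.contDiffOn) hmap
  -- supersolution property
  have hkey : ∀ x : E, (inner ℝ x x : ℝ) < ρ →
      lap β x < c * (β x) ^ p ∧ 0 < β x := by
    intro x hx
    set t : ℝ := (inner ℝ x x : ℝ) with ht
    have ht0 : 0 ≤ t := hSnn x
    have hu : 0 < ρ - t := by linarith
    have hβx : β x = C * (ρ - t) ^ (-α) := rfl
    have hβpos : 0 < β x := by
      rw [hβx]; positivity
    have hlapβ : lap β x = 2*(n:ℝ)*F1 t + 4*t*F2 t :=
      lap_radial F F1 F2 isOpen_Iio hFd hF1d x hx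
    have he1 : (ρ - t) ^ (-α-1) = (ρ - t) ^ (-α-1-1) * (ρ - t) := by
      have h := Real.rpow_add_one hu.ne' (-α-1-1)
      rw [show (-α-1-1)+1 = -α-1 by ring] at h
      exact h
    have hcoef : 4*α+4 = 2*(n:ℝ) := by rw [hα]; ring
    have hlapβ2 : lap β x = 2*(n:ℝ)*ρ*(C*α) * (ρ - t) ^ (-α-1-1) := by
      rw [hlapβ]
      simp only [hF1, hF2]
      rw [he1]
      linear_combination (C*α*((ρ-t)^(-α-1-1))*t) * hcoef
    have hcp : c * (β x) ^ p = 4*(n:ℝ)*ρ*(C*α) * (ρ - t) ^ (-α-1-1) := by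
      have hXnn : 0 ≤ (ρ - t) ^ (-α) := (Real.rpow_pos_of_pos hu _).le
      have h1 : (β x) ^ p = C^p * ((ρ-t)^(-α))^p := by
        rw [hβx, Real.mul_rpow hCpos.le hXnn]
      have h2 : ((ρ-t)^(-α))^p = (ρ-t)^(-α-1-1) := by
        rw [← Real.rpow_mul hu.le]
        congr 1
        rw [hp, hα]
        field_simp
        ring
      have h3 : C^p = (B₀*ρ)*C := by
        rw [show p = (p-1)+1 by ring, Real.rpow_add hCpos, Real.rpow_one, hCp1]
      have h4 : c*B₀ = 4*(n:ℝ)*α := by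
        rw [hB₀, hα]; field_simp; ring
      rw [h1, h2, h3]
      linear_combination ((ρ - t) ^ (-α-1-1) * ρ * C) * h4
    constructor
    · rw [hlapβ2, hcp]
      have hpow : 0 < (ρ - t) ^ (-α-1-1) := Real.rpow_pos_of_pos hu _
      have hn0 : (0:ℝ) < 2*(n:ℝ) := by linarith
      have hfac : 0 < 2*(n:ℝ)*ρ*(C*α) * (ρ - t)^(-α-1-1) :=
        mul_pos (mul_pos (mul_pos hn0 hρpos) (mul_pos hCpos hαpos)) hpow
      linarith
    · exact hβpos
  -- geometry: balls vs inner products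
  set R : ℝ := Real.sqrt ρ with hR
  have hRpos : 0 < R := Real.sqrt_pos.2 hρpos
  have hR2 : R^2 = ρ := Real.sq_sqrt hρpos.le
  -- max of v on the closed ball of radius R
  obtain ⟨zM, hzM, hzMmax'⟩ := (isCompact_closedBall (0:E) R).exists_isMaxOn
    ⟨0, Metric.mem_closedBall_self hRpos.le⟩ hv.continuous.continuousOn
  have hzMmax := isMaxOn_iff.1 hzMmax'
  set M : ℝ := v zM with hM
  have hMpos : 0 < M := hpos zM
  set h0 : ℝ := β 0 - v 0 with hh0
  set G : ℝ := (M + |h0| + 1)/C + 1 with hGdef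
  have hGpos : 0 < G := by
    have h1 : 0 < (M + |h0| + 1)/C := div_pos (by linarith [abs_nonneg h0]) hCpos
    rw [hGdef]; linarith
  set s : ℝ := min (ρ/2) (G ^ (-(1/α))) with hs
  have hspos : 0 < s := lt_min (by linarith) (Real.rpow_pos_of_pos hGpos _)
  have hsρ : s ≤ ρ/2 := min_le_left _ _
  -- annulus lower bound
  have hann : ∀ y : E, ρ - s ≤ (inner ℝ y y : ℝ) → (inner ℝ y y : ℝ) < ρ →
      |h0| + 1 ≤ β y - v y := by
    intro y h1 h2
    have hu : 0 < ρ - (inner ℝ y y : ℝ) := by linarith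
    have hus : ρ - (inner ℝ y y : ℝ) ≤ s := by linarith
    have hstep1 : s ^ (-α) ≤ (ρ - (inner ℝ y y:ℝ)) ^ (-α) :=
      Real.rpow_le_rpow_of_nonpos hu hus (by linarith)
    have hstep2 : G ≤ s ^ (-α) := by
      have h3 : s ≤ G ^ (-(1/α)) := min_le_right _ _
      have h4 := Real.rpow_le_rpow_of_nonpos hspos h3 (neg_nonpos.2 hαpos.le)
      rwa [← Real.rpow_mul hGpos.le,
        show (-(1/α))*(-α) = 1 by field_simp, Real.rpow_one] at h4
    have hβy : C * G ≤ β y := by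
      have hle : G ≤ (ρ - (inner ℝ y y:ℝ)) ^ (-α) := le_trans hstep2 hstep1
      calc C * G ≤ C * (ρ - (inner ℝ y y:ℝ)) ^ (-α) :=
            mul_le_mul_of_nonneg_left hle hCpos.le
        _ = β y := rfl
    have hCG : C * G = M + |h0| + 1 + C := by
      rw [hGdef]; field_simp
    have hvy : v y ≤ M := by
      apply hzMmax
      rw [Metric.mem_closedBall, dist_zero_right]
      have h3 : ‖y‖^2 ≤ R^2 := by rw [hR2, ← hSnorm]; linarith
      calc ‖y‖ = Real.sqrt (‖y‖^2) := (Real.sqrt_sq (norm_nonneg y)).symm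
        _ ≤ Real.sqrt (R^2) := Real.sqrt_le_sqrt h3
        _ = R := Real.sqrt_sq hRpos.le
    linarith [hCpos]
  -- compact core and minimum point
  set R' : ℝ := Real.sqrt (ρ - s) with hR'
  have hρs : 0 < ρ - s := by linarith
  have hR'pos : 0 < R' := Real.sqrt_pos.2 hρs
  have hR'2 : R'^2 = ρ - s := Real.sq_sqrt hρs.le
  set Q' := Metric.closedBall (0:E) R' with hQ'
  have hQ'c : IsCompact Q' := isCompact_closedBall _ _
  have h0Q' : (0:E) ∈ Q' := Metric.mem_closedBall_self hR'pos.le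
  set g := fun y : E => β y - v y with hg
  have hQ'V : Q' ⊆ V := by
    intro y hy
    have h1 : ‖y‖ ≤ R' := by
      rw [hQ', Metric.mem_closedBall, dist_zero_right] at hy; exact hy
    have h2 : (inner ℝ y y : ℝ) ≤ ρ - s := by
      rw [hSnorm, ← hR'2]
      exact pow_le_pow_left₀ (norm_nonneg y) h1 2
    show (inner ℝ y y : ℝ) < ρ
    linarith
  have hgc : ContinuousOn g Q' := by
    rw [hg]
    exact ((hβcd.continuousOn).sub hv.continuous.continuousOn).mono hQ'V
  obtain ⟨x₀, hx₀Q', hx₀min'⟩ := hQ'c.exists_isMinOn ⟨0, h0Q'⟩ hgc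
  have hx₀min := isMinOn_iff.1 hx₀min'
  have hx₀g0 : g x₀ ≤ g 0 := hx₀min 0 h0Q'
  have hx₀V : (inner ℝ x₀ x₀ : ℝ) < ρ := hQ'V hx₀Q'
  -- x₀ is a local min on the open set V
  have hlmin : IsLocalMin g x₀ := by
    filter_upwards [hVo.mem_nhds hx₀V] with y hy
    rcases le_or_gt (inner ℝ y y : ℝ) (ρ - s) with h|h
    · apply hx₀min
      rw [hQ', Metric.mem_closedBall, dist_zero_right]
      have h3 : ‖y‖^2 ≤ R'^2 := by rw [hR'2, ← hSnorm]; linarith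
      calc ‖y‖ = Real.sqrt (‖y‖^2) := (Real.sqrt_sq (norm_nonneg y)).symm
        _ ≤ Real.sqrt (R'^2) := Real.sqrt_le_sqrt h3
        _ = R' := Real.sqrt_sq hR'pos.le
    · have h4 := hann y h.le hy
      have h5 : g 0 = h0 := rfl
      have h6 : g x₀ ≤ |h0| := le_trans hx₀g0 (by rw [h5]; exact le_abs_self h0)
      have h7 : g y = β y - v y := rfl
      rw [h7]
      linarith
  -- second derivative test and conclusion
  have hgsm : ContDiffOn ℝ 2 g V := by
    rw [hg]; exact hβcd.sub hv.contDiffOn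
  have hlapg : 0 ≤ lap g x₀ := lap_nonneg_of_isLocalMin hVo hx₀V hgsm hlmin
  have hlapg_eq : lap g x₀ = lap β x₀ - lap v x₀ := by
    rw [hg]; exact lap_sub hVo hβcd hv.contDiffOn hx₀V
  obtain ⟨hsup, hβx₀pos⟩ := hkey x₀ hx₀V
  have h1 : c * v x₀ ^ p ≤ lap β x₀ := by
    have := heq x₀; linarith
  have h2 : c * v x₀ ^ p < c * β x₀ ^ p := lt_of_le_of_lt h1 hsup
  have h3 : v x₀ ^ p < β x₀ ^ p := (mul_lt_mul_iff_right₀ hc).1 h2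
  have h4 : v x₀ < β x₀ := by
    by_contra hcon
    push_neg at hcon
    exact absurd h3 (not_lt.2 (Real.rpow_le_rpow hβx₀pos.le hcon hppos.le))
  have h5 : 0 < g x₀ := by
    have : g x₀ = β x₀ - v x₀ := rfl
    linarith
  -- but g 0 < 0
  have hβ00 : β 0 = C * ρ^(-α) := by
    have hi0 : (inner ℝ (0:E) (0:E) : ℝ) = 0 := inner_zero_left 0
    show F ((inner ℝ (0:E) (0:E) : ℝ)) = C * ρ^(-α)
    rw [hi0]
    show C * (ρ - 0)^(-α) = C * ρ^(-α)
    rw [sub_zero]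
  have hCρ : C * ρ^(-α) < v 0 := by
    have e1 : C = D * ρ^κ := by
      rw [hC, hD, Real.mul_rpow hB₀pos.le hρpos.le]
    have e2 : ρ^κ * ρ^(-α) = ρ^(-κ) := by
      rw [← Real.rpow_add hρpos]; congr 1; rw [hκ, hα]; ring
    have e3 : ρ^(-κ) = (ρ^κ)⁻¹ := Real.rpow_neg hρpos.le κ
    have e4 : v 0 * (D/(v 0)+1) = D + v 0 := by field_simp
    calc C * ρ^(-α) = D * (ρ^κ * ρ^(-α)) := by rw [e1]; ring
      _ = D * (ρ^κ)⁻¹ := by rw [e2, e3]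
      _ = D / (D/(v 0)+1) := by rw [hρκ]; field_simp
      _ < v 0 := by
          rw [div_lt_iff₀ hbase, e4]
          linarith
  have hg0neg : g 0 < 0 := by
    have : g 0 = β 0 - v 0 := rfl
    rw [this, hβ00]
    linarith
  linarith

end

theorem stmt_7 (n : ℕ) (hn : 3 ≤ n) (μ a b : ℝ)
    (hcase : (a = 0 ∧ 0 ≤ μ ∧ 0 ≤ b ∧ μ + b ≠ 0) ∨ (a < 0 ∧ μ = 0 ∧ b = 0)) :
    ¬ ∃ v : EuclideanSpace ℝ (Fin n) → ℝ, ContDiff ℝ (⊤ : ℕ∞) v ∧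
        (∀ x, 0 < v x) ∧
        (∀ x, lap v x + μ * v x + a * v x ^ (((n : ℝ) + 2) / ((n : ℝ) - 2))
            + b * v x ^ (-(3 * (n : ℝ) - 2) / ((n : ℝ) - 2)) = 0) := by
  rintro ⟨v, hv, hpos, heq⟩
  have hv2 : ContDiff ℝ 2 v := hv.of_le (WithTop.coe_le_coe.2 le_top)
  have hNR2 : (0:ℝ) < (n:ℝ) - 2 := by
    have : (3:ℝ) ≤ (n:ℝ) := by exact_mod_cast hn
    linarith
  rcases hcase with ⟨ha, hμ, hb, hμb⟩ | ⟨ha, hμ, hb⟩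
  · -- case 1
    have hen : (-(3 * (n:ℝ) - 2) / ((n:ℝ) - 2)) < 0 := by
      apply div_neg_of_neg_of_pos _ hNR2
      have : (3:ℝ) ≤ (n:ℝ) := by exact_mod_cast hn
      linarith
    exact case1 (by omega) μ b _ hμ hb hμb hen v hv2 hpos
      (fun x => by have := heq x; rw [ha] at this; linarith)
  · -- case 2
    refine case2 hn (-a) (((n:ℝ) + 2) / ((n:ℝ) - 2)) (by linarith) rfl v hv2 hpos
      (fun x => ?_)
    have := heq x
    rw [hμ, hb] at this
    linarith
end

section
/- Let n ≥ 3 be an integer and let β > 0 and σ² > 0 be real constants. Then every smooth function φ : ℝⁿ → ℝ with φ > 0 everywhere satisfying the Lichnerowicz equation Δφ = β·φ^{(n+2)/(n−2)} − σ²·φ^{−(3n−2)/(n−2)} on all of ℝⁿ is a constant function. (This is the scalar-flat Euclidean case of Theorem 5.1, since ℝⁿ is a noncompact complete Ricci-flat manifold with vanishing scalar curvature, so the conformal Laplacian reduces to Δ.) -/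
open Real Filter

section Aux

/-- Second derivative along a direction is nonnegative at a local minimum. -/
lemma second_deriv_nonneg_of_isLocalMin_s8
    {X : Type*} [NormedAddCommGroup X] [NormedSpace ℝ X]
    {v : X → ℝ} {p e : X} {Φ : X →L[ℝ] ℝ}
    (hdiff : ∀ᶠ y in nhds p, DifferentiableAt ℝ v y)
    (hF : HasFDerivAt (fun y => fderiv ℝ v y e) Φ p)
    (hmin : IsLocalMin v p) : 0 ≤ Φ e := by
  by_contra hD
  push_neg at hD
  set ℓ : ℝ → X := fun t => p + t • e with hℓ
  have hline : ∀ t : ℝ, HasDerivAt ℓ e t := by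
    intro t
    have h1 : HasDerivAt (fun t : ℝ => t • e) ((1:ℝ) • e) t :=
      (hasDerivAt_id t).smul_const e
    simpa only [one_smul] using h1.const_add p
  have hℓcont : Continuous ℓ := by continuity
  set g : ℝ → ℝ := fun t => fderiv ℝ v (ℓ t) e with hg
  set h : ℝ → ℝ := fun t => v (ℓ t) with hh
  have hℓ0 : ℓ 0 = p := by simp [hℓ]
  have hmin0 : IsLocalMin h 0 :=
    (hℓ0 ▸ hmin).comp_continuous hℓcont.continuousAt
  have hdiff' : ∀ᶠ t in nhds (0:ℝ), HasDerivAt h (g t) t := by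
    have : ∀ᶠ t in nhds (0:ℝ), DifferentiableAt ℝ v (ℓ t) := by
      have := hℓcont.continuousAt (x := (0:ℝ))
      rw [ContinuousAt, hℓ0] at this
      exact this hdiff
    filter_upwards [this] with t ht
    exact ht.hasFDerivAt.comp_hasDerivAt t (hline t)
  have hg0 : g 0 = 0 := by
    have h0 : HasDerivAt h (g 0) 0 := hdiff'.self_of_nhds
    exact hmin0.hasDerivAt_eq_zero h0
  have hgD : HasDerivAt g (Φ e) 0 := by
    have h1 : HasFDerivAt (fun y => fderiv ℝ v y e) Φ (ℓ 0) := hℓ0 ▸ hF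
    exact h1.comp_hasDerivAt 0 (hline 0)
  have hneg : ∀ᶠ t in nhds (0:ℝ), 0 < t → g t < 0 := by
    have hslope := hasDerivAt_iff_tendsto_slope.1 hgD
    have : ∀ᶠ t in nhdsWithin (0:ℝ) {(0:ℝ)}ᶜ, slope g 0 t < 0 :=
      hslope (Iio_mem_nhds hD)
    rw [eventually_nhdsWithin_iff] at this
    filter_upwards [this] with t ht ht0
    have hts := ht (by simp [ne_of_gt ht0])
    have h2 : (g t - g 0) / (t - 0) < 0 := by simpa [slope_def_field, div_eq_iff] using hts
    rw [hg0, sub_zero, sub_zero] at h2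
    have := (div_lt_iff₀ ht0).mp h2
    linarith
  obtain ⟨δ, hδpos, hδ⟩ := Metric.eventually_nhds_iff.mp ((hdiff'.and hmin0).and hneg)
  set t₀ : ℝ := δ/2 with ht₀
  have ht₀pos : 0 < t₀ := by positivity
  have hmem : ∀ t ∈ Set.Icc (0:ℝ) t₀, dist t (0:ℝ) < δ := by
    intro t ht
    rw [Real.dist_eq, sub_zero, abs_of_nonneg ht.1]
    linarith [ht.2]
  have hanti : StrictAntiOn h (Set.Icc 0 t₀) := by
    apply strictAntiOn_of_deriv_neg (convex_Icc _ _)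
    · intro t ht
      exact ((hδ (hmem t ht)).1.1).differentiableAt.continuousAt.continuousWithinAt
    · intro t ht
      rw [interior_Icc] at ht
      have h1 := hδ (hmem t ⟨le_of_lt ht.1, le_of_lt ht.2⟩)
      rw [h1.1.1.deriv]
      exact h1.2 ht.1
  have hlt : h t₀ < h 0 := hanti ⟨le_refl 0, le_of_lt ht₀pos⟩ ⟨le_of_lt ht₀pos, le_refl _⟩ ht₀pos
  have hge : h 0 ≤ h t₀ :=
    (hδ (by rw [Real.dist_eq, sub_zero, abs_of_nonneg (le_of_lt ht₀pos)]; linarith)).1.2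
  linarith

lemma lap_neg {n : ℕ} (φ : EuclideanSpace ℝ (Fin n) → ℝ) (x : EuclideanSpace ℝ (Fin n)) :
    lap (fun y => -φ y) x = -lap φ x := by
  unfold lap
  rw [← Finset.sum_neg_distrib]
  apply Finset.sum_congr rfl
  intro i _
  have h1 : (fun y => fderiv ℝ (fun z => -φ z) y (EuclideanSpace.single i 1))
      = fun y => -((fun z => fderiv ℝ φ z (EuclideanSpace.single i 1)) y) := by
    funext y
    rw [fderiv_fun_neg]
    rfl
  rw [h1, fderiv_fun_neg]
  rfl

variable {n : ℕ}

/-- squared distance to `c` -/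
noncomputable def qf (c : EuclideanSpace ℝ (Fin n)) (y : EuclideanSpace ℝ (Fin n)) : ℝ :=
  ∑ i, (y i - c i)^2

noncomputable def Lq (c x : EuclideanSpace ℝ (Fin n)) : EuclideanSpace ℝ (Fin n) →L[ℝ] ℝ :=
  ∑ i, (2*(x i - c i)) • (EuclideanSpace.proj i : EuclideanSpace ℝ (Fin n) →L[ℝ] ℝ)

lemma hasFDerivAt_qf (c x : EuclideanSpace ℝ (Fin n)) :
    HasFDerivAt (qf c) (Lq c x) x := by
  have h : ∀ i : Fin n, HasFDerivAt (fun y : EuclideanSpace ℝ (Fin n) => (y i - c i)^2)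
      ((2*(x i - c i)) • (EuclideanSpace.proj i : EuclideanSpace ℝ (Fin n) →L[ℝ] ℝ)) x := by
    intro i
    have h1 : HasDerivAt (fun t : ℝ => (t - c i)^2) (2*(x i - c i)) (x i) := by
      have := ((hasDerivAt_id (x i)).sub_const (c i)).pow 2
      simpa [mul_comm, Pi.pow_def] using this
    have h2 : HasFDerivAt (fun y : EuclideanSpace ℝ (Fin n) => y i)
        (EuclideanSpace.proj (𝕜 := ℝ) i) x :=
      (EuclideanSpace.proj (𝕜 := ℝ) i).hasFDerivAt
    exact h1.comp_hasFDerivAt x h2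
  exact HasFDerivAt.fun_sum (fun i _ => h i)

lemma Lq_apply (c x : EuclideanSpace ℝ (Fin n)) (j : Fin n) :
    Lq c x (EuclideanSpace.single j 1) = 2*(x j - c j) := by
  simp [Lq, EuclideanSpace.single_apply]

lemma qf_nonneg (c x : EuclideanSpace ℝ (Fin n)) : 0 ≤ qf c x :=
  Finset.sum_nonneg fun i _ => sq_nonneg _

lemma qf_self (c : EuclideanSpace ℝ (Fin n)) : qf c c = 0 := by simp [qf]

lemma qf_cont (c : EuclideanSpace ℝ (Fin n)) : Continuous (qf c) := by
  unfold qf; fun_prop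

lemma qf_eq_norm (c x : EuclideanSpace ℝ (Fin n)) : qf c x = ‖x - c‖^2 := by
  rw [EuclideanSpace.norm_eq]
  rw [Real.sq_sqrt (Finset.sum_nonneg fun i _ => sq_nonneg _)]
  simp [qf]

lemma diffAt_fderiv_apply_s8 {φ : EuclideanSpace ℝ (Fin n) → ℝ} (hφ : ContDiff ℝ (⊤ : ℕ∞) φ)
    (v : EuclideanSpace ℝ (Fin n)) (x : EuclideanSpace ℝ (Fin n)) :
    DifferentiableAt ℝ (fun y => fderiv ℝ φ y v) x := by
  have h1 : ContDiff ℝ (⊤ : ℕ∞) (fderiv ℝ φ) := hφ.fderiv_right (by simp)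
  exact ((h1.clm_apply contDiff_const).differentiable (by simp)).differentiableAt

lemma key_min {φ : EuclideanSpace ℝ (Fin n) → ℝ} (hφ : ContDiff ℝ (⊤ : ℕ∞) φ)
    {s : Set (EuclideanSpace ℝ (Fin n))} (hs : IsOpen s) {p : EuclideanSpace ℝ (Fin n)}
    (hp : p ∈ s) {c : EuclideanSpace ℝ (Fin n)} {g g₁ g₂ : ℝ → ℝ}
    (hg : ∀ y ∈ s, HasDerivAt g (g₁ (qf c y)) (qf c y))
    (hg1 : ∀ y ∈ s, HasDerivAt g₁ (g₂ (qf c y)) (qf c y))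
    (hmin : IsLocalMin (fun y => φ y + g (qf c y)) p) :
    0 ≤ lap φ p + (4 * qf c p * g₂ (qf c p) + 2 * n * g₁ (qf c p)) := by
  classical
  set e : Fin n → EuclideanSpace ℝ (Fin n) := fun i => EuclideanSpace.single i 1 with he
  set W : EuclideanSpace ℝ (Fin n) → ℝ := fun y => g (qf c y) with hW
  have hWd : ∀ y ∈ s, HasFDerivAt W (g₁ (qf c y) • Lq c y) y := fun y hy =>
    (hg y hy).comp_hasFDerivAt y (hasFDerivAt_qf c y)
  set v : EuclideanSpace ℝ (Fin n) → ℝ := fun y => φ y + g (qf c y) with hv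
  have hsnhds : s ∈ nhds p := hs.mem_nhds hp
  have hφd : ∀ y, DifferentiableAt ℝ φ y := fun y => (hφ.differentiable (by simp)).differentiableAt
  have hcoord : ∀ j : Fin n,
      0 ≤ fderiv ℝ (fun y => fderiv ℝ φ y (e j)) p (e j)
        + (2 * g₁ (qf c p) + 4 * g₂ (qf c p) * (p j - c j)^2) := by
    intro j
    set D2 : EuclideanSpace ℝ (Fin n) →L[ℝ] ℝ :=
      fderiv ℝ (fun y => fderiv ℝ φ y (e j)) p with hD2
    have hlin : HasFDerivAt (fun y : EuclideanSpace ℝ (Fin n) => 2*(y j - c j))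
        ((2:ℝ) • (EuclideanSpace.proj j : EuclideanSpace ℝ (Fin n) →L[ℝ] ℝ)) p := by
      have h1 : HasDerivAt (fun t : ℝ => 2*(t - c j)) 2 (p j) := by
        simpa using ((hasDerivAt_id (p j)).sub_const (c j)).const_mul (2:ℝ)
      have h2 : HasFDerivAt (fun y : EuclideanSpace ℝ (Fin n) => y j)
          (EuclideanSpace.proj (𝕜 := ℝ) j) p := (EuclideanSpace.proj (𝕜 := ℝ) j).hasFDerivAt
      exact (h1.comp_hasFDerivAt p h2 :)
    have hg1f : HasFDerivAt (fun y : EuclideanSpace ℝ (Fin n) => g₁ (qf c y))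
        (g₂ (qf c p) • Lq c p) p :=
      (hg1 p hp).comp_hasFDerivAt p (hasFDerivAt_qf c p)
    have hprod : HasFDerivAt (fun y : EuclideanSpace ℝ (Fin n) => g₁ (qf c y) * (2*(y j - c j)))
        (g₁ (qf c p) • ((2:ℝ) • (EuclideanSpace.proj j : EuclideanSpace ℝ (Fin n) →L[ℝ] ℝ))
          + (2*(p j - c j)) • (g₂ (qf c p) • Lq c p)) p := hg1f.mul hlin
    have hT1 : HasFDerivAt (fun y => fderiv ℝ φ y (e j)) D2 p :=
      (diffAt_fderiv_apply_s8 hφ (e j) p).hasFDerivAt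
    have hEv : (fun y => fderiv ℝ v y (e j)) =ᶠ[nhds p]
        (fun y => fderiv ℝ φ y (e j) + g₁ (qf c y) * (2*(y j - c j))) := by
      filter_upwards [hsnhds] with y hy
      have hWy := hWd y hy
      have hfv : fderiv ℝ v y = fderiv ℝ φ y + g₁ (qf c y) • Lq c y := by
        rw [hv]
        rw [fderiv_fun_add (hφd y) hWy.differentiableAt, hWy.fderiv]
      rw [hfv]
      simp only [ContinuousLinearMap.add_apply, ContinuousLinearMap.coe_smul', Pi.smul_apply,
        smul_eq_mul, he]
      rw [Lq_apply]
    have hF : HasFDerivAt (fun y => fderiv ℝ v y (e j))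
        (D2 + (g₁ (qf c p) • ((2:ℝ) • (EuclideanSpace.proj j : EuclideanSpace ℝ (Fin n) →L[ℝ] ℝ))
          + (2*(p j - c j)) • (g₂ (qf c p) • Lq c p))) p :=
      (hT1.add hprod).congr_of_eventuallyEq hEv
    have hdiffv : ∀ᶠ y in nhds p, DifferentiableAt ℝ v y := by
      filter_upwards [hsnhds] with y hy
      exact (hφd y).add (hWd y hy).differentiableAt
    have h0 := second_deriv_nonneg_of_isLocalMin_s8 hdiffv hF hmin
    have happ : (D2 + (g₁ (qf c p) • ((2:ℝ) • (EuclideanSpace.proj j : EuclideanSpace ℝ (Fin n) →L[ℝ] ℝ))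
          + (2*(p j - c j)) • (g₂ (qf c p) • Lq c p))) (e j)
        = D2 (e j) + (2 * g₁ (qf c p) + 4 * g₂ (qf c p) * (p j - c j)^2) := by
      simp only [ContinuousLinearMap.add_apply, ContinuousLinearMap.coe_smul', Pi.smul_apply,
        smul_eq_mul, he]
      rw [Lq_apply]
      simp [EuclideanSpace.single_apply]
      ring
    rw [happ] at h0
    exact h0
  have hsum := Finset.sum_nonneg (fun j (_ : j ∈ Finset.univ) => hcoord j)
  rw [Finset.sum_add_distrib] at hsum
  have h1 : ∑ j, fderiv ℝ (fun y => fderiv ℝ φ y (e j)) p (e j) = lap φ p := rfl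
  have h2 : ∑ j : Fin n, (2 * g₁ (qf c p) + 4 * g₂ (qf c p) * (p j - c j)^2)
      = 4 * qf c p * g₂ (qf c p) + 2 * n * g₁ (qf c p) := by
    rw [Finset.sum_add_distrib, Finset.sum_const, ← Finset.mul_sum]
    simp only [Finset.card_univ, Fintype.card_fin, nsmul_eq_mul]
    have : ∑ j : Fin n, (p j - c j)^2 = qf c p := rfl
    rw [this]
    ring
  rw [h1, h2] at hsum
  exact hsum

lemma key_max {φ : EuclideanSpace ℝ (Fin n) → ℝ} (hφ : ContDiff ℝ (⊤ : ℕ∞) φ)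
    {s : Set (EuclideanSpace ℝ (Fin n))} (hs : IsOpen s) {p : EuclideanSpace ℝ (Fin n)}
    (hp : p ∈ s) {c : EuclideanSpace ℝ (Fin n)} {g g₁ g₂ : ℝ → ℝ}
    (hg : ∀ y ∈ s, HasDerivAt g (g₁ (qf c y)) (qf c y))
    (hg1 : ∀ y ∈ s, HasDerivAt g₁ (g₂ (qf c y)) (qf c y))
    (hmax : IsLocalMax (fun y => φ y + g (qf c y)) p) :
    lap φ p + (4 * qf c p * g₂ (qf c p) + 2 * n * g₁ (qf c p)) ≤ 0 := by
  have hmin : IsLocalMin (fun y => (fun z => -φ z) y + (fun t => -g t) (qf c y)) p := by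
    have := hmax.neg
    simpa [neg_add, add_comm] using this
  have h := key_min (φ := fun z => -φ z) hφ.neg hs hp
    (g := fun t => -g t) (g₁ := fun t => -g₁ t) (g₂ := fun t => -g₂ t)
    (fun y hy => (hg y hy).neg) (fun y hy => (hg1 y hy).neg) hmin
  rw [lap_neg] at h
  linarith

/-- derivative of `t ↦ (1-t)^r` -/
lemma hasDerivAt_one_sub_rpow {t r : ℝ} (ht : t < 1) :
    HasDerivAt (fun t : ℝ => (1-t) ^ r) (-r * (1-t) ^ (r-1)) t := by
  have hpos : 0 < 1 - t := by linarith
  have h1 : HasDerivAt (fun x : ℝ => x ^ r) (r * (1-t) ^ (r-1)) (1-t) :=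
    Real.hasDerivAt_rpow_const (Or.inl (ne_of_gt hpos))
  have h2 : HasDerivAt (fun t : ℝ => 1 - t) (-1) t := by
    simpa using (hasDerivAt_id t).const_sub 1
  have := h1.comp t h2
  simpa [mul_comm, Function.comp_def] using this

lemma rpow_anti_base {a b e : ℝ} (ha : 0 < a) (hab : a ≤ b) (he : e ≤ 0) :
    b ^ e ≤ a ^ e := by
  have hb : 0 < b := lt_of_lt_of_le ha hab
  have h1 : a ^ (-e) ≤ b ^ (-e) := Real.rpow_le_rpow ha.le hab (by linarith)
  have h2 : 0 < a ^ (-e) := Real.rpow_pos_of_pos ha _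
  calc b ^ e = (b ^ (-e))⁻¹ := by rw [← Real.rpow_neg hb.le, neg_neg]
    _ ≤ (a ^ (-e))⁻¹ := by exact inv_anti₀ h2 h1
    _ = a ^ e := by rw [← Real.rpow_neg ha.le, neg_neg]

lemma mem_closedBall_iff_qf {n : ℕ} (c x : EuclideanSpace ℝ (Fin n)) {rsq : ℝ} (h : 0 ≤ rsq) :
    x ∈ Metric.closedBall c (Real.sqrt rsq) ↔ qf c x ≤ rsq := by
  rw [Metric.mem_closedBall, dist_eq_norm, qf_eq_norm]
  exact Real.le_sqrt (norm_nonneg _) h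

lemma mem_ball_iff_qf {n : ℕ} (c x : EuclideanSpace ℝ (Fin n)) {rsq : ℝ} :
    x ∈ Metric.ball c (Real.sqrt rsq) ↔ qf c x < rsq := by
  rw [Metric.mem_ball, dist_eq_norm, qf_eq_norm]
  exact Real.lt_sqrt (norm_nonneg _)

end Aux

set_option maxHeartbeats 2000000 in
theorem stmt_8 (n : ℕ) (hn : 3 ≤ n) (β σsq : ℝ) (hβ : 0 < β) (hσ : 0 < σsq)
    (φ : EuclideanSpace ℝ (Fin n) → ℝ) (hφ : ContDiff ℝ (⊤ : ℕ∞) φ)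
    (hpos : ∀ x, 0 < φ x)
    (heq : ∀ x, lap φ x = β * φ x ^ (((n : ℝ) + 2) / ((n : ℝ) - 2))
        - σsq * φ x ^ (-((3 * (n : ℝ) - 2) / ((n : ℝ) - 2)))) :
    ∀ x y, φ x = φ y := by
  have hn3 : (3:ℝ) ≤ (n:ℝ) := by exact_mod_cast hn
  have hnpos : (0:ℝ) < n := by linarith
  have hn2 : (0:ℝ) < (n:ℝ) - 2 := by linarith
  set α : ℝ := ((n : ℝ) + 2) / ((n : ℝ) - 2) with hα_def
  set γ : ℝ := (3 * (n : ℝ) - 2) / ((n : ℝ) - 2) with hγ_def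
  set f : ℝ → ℝ := fun t => β * t ^ α - σsq * t ^ (-γ) with hf_def
  have hα1 : 1 < α := by
    rw [hα_def, lt_div_iff₀ hn2]; linarith
  have hγpos : 0 < γ := by
    rw [hγ_def]; exact div_pos (by linarith) hn2
  have hαγ : α + γ = 4 * n / ((n:ℝ) - 2) := by
    rw [hα_def, hγ_def, ← add_div]; ring_nf
  -- f is strictly monotone on positives
  have hf_mono : ∀ a b : ℝ, 0 < a → a < b → f a < f b := by
    intro a b ha hab
    have h1 : β * a ^ α < β * b ^ α := by
      have h0 : a ^ α < b ^ α := Real.rpow_lt_rpow (z := α) ha.le hab (by linarith)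
      exact (mul_lt_mul_iff_right₀ hβ).mpr h0
    have h2 : σsq * b ^ (-γ) < σsq * a ^ (-γ) := by
      have hb : 0 < b := lt_trans ha hab
      have h3 : a ^ γ < b ^ γ := Real.rpow_lt_rpow ha.le hab hγpos
      have h4 : (b ^ γ)⁻¹ < (a ^ γ)⁻¹ :=
        inv_strictAnti₀ (Real.rpow_pos_of_pos ha γ) h3
      rw [Real.rpow_neg ha.le, Real.rpow_neg hb.le]
      exact (mul_lt_mul_iff_right₀ hσ).mpr h4
    simp only [hf_def]
    linarith
  -- the constant root
  set c : ℝ := (σsq / β) ^ (((n:ℝ) - 2) / (4 * n)) with hc_def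
  have hc : 0 < c := Real.rpow_pos_of_pos (div_pos hσ hβ) _
  have hcαγ : c ^ (α + γ) = σsq / β := by
    rw [hc_def, ← Real.rpow_mul (le_of_lt (div_pos hσ hβ))]
    rw [hαγ]
    have : ((n:ℝ) - 2) / (4 * n) * (4 * n / ((n:ℝ) - 2)) = 1 := by
      field_simp
    rw [this, Real.rpow_one]
  have hfc : f c = 0 := by
    have h1 : c ^ α * c ^ γ = σsq / β := by rw [← Real.rpow_add hc]; exact hcαγ
    have h2 : c ^ γ > 0 := Real.rpow_pos_of_pos hc γ
    simp only [hf_def]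
    rw [Real.rpow_neg hc.le]
    have h3 : β * c ^ α * c ^ γ = σsq := by
      rw [mul_assoc, h1]
      field_simp
    have h4 : β * c ^ α = σsq * (c ^ γ)⁻¹ := by
      field_simp
      linarith [h3]
    linarith
  have hφd : Differentiable ℝ φ := hφ.differentiable (by simp)
  have hφcont : Continuous φ := hφd.continuous
  -- STEP A : uniform upper bound via barrier
  set pp : ℝ := ((n:ℝ) - 2) / 2 with hpp_def
  have hpp : 0 < pp := by rw [hpp_def]; positivity
  have hppα : pp * α = pp + 2 := by
    rw [hpp_def, hα_def]
    field_simp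
    ring
  set K : ℝ := 2 * pp * (2 * n + 4 * pp + 4) / β with hK_def
  have hKpos : 0 < K := by rw [hK_def]; positivity
  set A : ℝ := max (2*c) ((K+1) ^ (1/(α-1))) with hA_def
  have hApos : 0 < A := lt_of_lt_of_le (by linarith) (le_max_left _ _)
  have hA2c : 2*c ≤ A := le_max_left _ _
  have hAK : K < A ^ (α - 1) := by
    have h1 : (K+1) ^ (1/(α-1)) ≤ A := le_max_right _ _
    have h2 : ((K+1) ^ (1/(α-1))) ^ (α-1) ≤ A ^ (α-1) :=
      Real.rpow_le_rpow (Real.rpow_nonneg (by linarith) _) h1 (by linarith)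
    have h3 : ((K+1) ^ (1/(α-1))) ^ (α-1) = K + 1 := by
      rw [← Real.rpow_mul (by linarith : (0:ℝ) ≤ K+1)]
      rw [one_div, inv_mul_cancel₀ (by linarith : α - 1 ≠ 0), Real.rpow_one]
    linarith [h3 ▸ h2]
  have hbound : ∀ x₀, φ x₀ ≤ A := by
    intro x₀
    by_contra hcon
    push_neg at hcon
    -- the open set where the barrier is defined
    set sball : Set (EuclideanSpace ℝ (Fin n)) := {y | qf x₀ y < 1} with hsball_def
    have hsball_open : IsOpen sball := isOpen_lt (qf_cont x₀) continuous_const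
    have hx₀s : x₀ ∈ sball := by simp [hsball_def, qf_self]
    -- barrier functions
    set g : ℝ → ℝ := fun t => -(A * (1-t) ^ (-pp)) with hg_def
    set g₁ : ℝ → ℝ := fun t => -(A * pp * (1-t) ^ (-pp-1)) with hg1_def
    set g₂ : ℝ → ℝ := fun t => -(A * pp * (pp+1) * (1-t) ^ (-pp-2)) with hg2_def
    have hgd : ∀ t < (1:ℝ), HasDerivAt g (g₁ t) t := by
      intro t ht
      have := (hasDerivAt_one_sub_rpow (r := -pp) ht).const_mul A
      have h2 := this.fun_neg
      simp only [hg_def, hg1_def]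
      refine h2.congr_deriv ?_
      ring_nf
    have hg1d : ∀ t < (1:ℝ), HasDerivAt g₁ (g₂ t) t := by
      intro t ht
      have := (hasDerivAt_one_sub_rpow (r := -pp-1) ht).const_mul (A * pp)
      have h2 := this.fun_neg
      simp only [hg1_def, hg2_def]
      refine h2.congr_deriv ?_
      ring_nf
    -- bound on the closed unit ball
    obtain ⟨xm, _, hxm⟩ := (isCompact_closedBall x₀ 1).exists_isMaxOn
      ⟨x₀, Metric.mem_closedBall_self zero_le_one⟩ hφcont.continuousOn
    set C₀ : ℝ := max (φ xm) A with hC0_def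
    have hC0A : A ≤ C₀ := le_max_right _ _
    have hC0pos : 0 < C₀ := lt_of_lt_of_le hApos hC0A
    have hφC0 : ∀ x ∈ Metric.closedBall x₀ 1, φ x ≤ C₀ :=
      fun x hx => le_trans (hxm hx) (le_max_left _ _)
    set d₀ : ℝ := (A / C₀) ^ (1/pp) with hd0_def
    have hd0pos : 0 < d₀ := Real.rpow_pos_of_pos (div_pos hApos hC0pos) _
    have hd0le1 : d₀ ≤ 1 :=
      Real.rpow_le_one (le_of_lt (div_pos hApos hC0pos))
        ((div_le_one hC0pos).mpr hC0A) (by positivity)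
    have hd0pow : d₀ ^ (-pp) = C₀ / A := by
      rw [hd0_def, ← Real.rpow_mul (le_of_lt (div_pos hApos hC0pos))]
      rw [one_div]
      rw [show (pp⁻¹ * (-pp)) = -1 by field_simp]
      rw [Real.rpow_neg_one]
      rw [inv_div]
    set ρsq : ℝ := 1 - d₀/2 with hρsq_def
    have hρsq_pos : 0 < ρsq := by rw [hρsq_def]; linarith
    have hρsq_lt1 : ρsq < 1 := by rw [hρsq_def]; linarith
    set ρ : ℝ := Real.sqrt ρsq with hρ_def
    have hρpos : 0 < ρ := Real.sqrt_pos.mpr hρsq_pos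
    have hρle1 : ρ ≤ 1 := by
      rw [hρ_def]
      calc Real.sqrt ρsq ≤ Real.sqrt 1 := Real.sqrt_le_sqrt (le_of_lt hρsq_lt1)
        _ = 1 := Real.sqrt_one
    have hqf_ball : ∀ x, x ∈ Metric.closedBall x₀ ρ ↔ qf x₀ x ≤ ρsq := by
      intro x
      rw [hρ_def]
      exact mem_closedBall_iff_qf x₀ x hρsq_pos.le
    -- the function u = φ - w
    set u : EuclideanSpace ℝ (Fin n) → ℝ := fun y => φ y + g (qf x₀ y) with hu_def
    have hu_cont : ContinuousOn u (Metric.closedBall x₀ ρ) := by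
      intro x hx
      have hq : qf x₀ x < 1 := lt_of_le_of_lt ((hqf_ball x).mp hx) hρsq_lt1
      apply ContinuousWithinAt.add (hφcont.continuousAt.continuousWithinAt)
      apply ContinuousAt.continuousWithinAt
      have hgc : ContinuousAt g (qf x₀ x) := by
        apply ContinuousAt.neg
        apply ContinuousAt.mul continuousAt_const
        apply ContinuousAt.rpow_const
        · exact (continuousAt_const.sub continuousAt_id)
        · left
          show (1:ℝ) - qf x₀ x ≠ 0
          intro hcontra
          linarith
      exact hgc.comp (qf_cont x₀).continuousAt
    have hux₀ : 0 < u x₀ := by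
      simp only [hu_def, hg_def, qf_self, sub_zero, Real.one_rpow]
      norm_num [Real.one_rpow]
      linarith
    obtain ⟨p₀, hp₀mem, hp₀max⟩ := (isCompact_closedBall x₀ ρ).exists_isMaxOn
      ⟨x₀, Metric.mem_closedBall_self hρpos.le⟩ hu_cont
    have hup₀ : 0 < u p₀ :=
      lt_of_lt_of_le hux₀ (hp₀max (Metric.mem_closedBall_self hρpos.le))
    have hqp₀ : qf x₀ p₀ < ρsq := by
      rcases lt_or_ge (qf x₀ p₀) ρsq with h | h
      · exact h
      exfalso
      have hqeq : qf x₀ p₀ = ρsq := le_antisymm ((hqf_ball p₀).mp hp₀mem) h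
      have hd : 1 - qf x₀ p₀ = d₀/2 := by rw [hqeq, hρsq_def]; ring
      have h1 : d₀ ^ (-pp) ≤ (d₀/2) ^ (-pp) :=
        rpow_anti_base (by positivity) (by linarith) (by linarith)
      have h2 : C₀ ≤ A * (1 - qf x₀ p₀) ^ (-pp) := by
        rw [hd]
        have h3 : C₀ = A * d₀ ^ (-pp) := by
          rw [hd0pow]
          field_simp
        rw [h3]
        exact mul_le_mul_of_nonneg_left h1 hApos.le
      have hsub : Metric.closedBall x₀ ρ ⊆ Metric.closedBall x₀ 1 :=
        Metric.closedBall_subset_closedBall hρle1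
      have hφp₀ : φ p₀ ≤ C₀ := hφC0 p₀ (hsub hp₀mem)
      have : u p₀ ≤ 0 := by
        simp only [hu_def, hg_def]
        linarith
      linarith
    have hp₀s : p₀ ∈ sball := by
      simp only [hsball_def, Set.mem_setOf_eq]
      linarith
    have hlocmax : IsLocalMax u p₀ := by
      have hball : Metric.ball x₀ ρ ∈ nhds p₀ := by
        apply Metric.isOpen_ball.mem_nhds
        rw [hρ_def]
        exact (mem_ball_iff_qf x₀ p₀).mpr hqp₀
      filter_upwards [hball] with y hy
      exact hp₀max (Metric.ball_subset_closedBall hy)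
    have hkey := key_max hφ hsball_open hp₀s (c := x₀) (g := g) (g₁ := g₁) (g₂ := g₂)
      (fun y hy => hgd _ hy) (fun y hy => hg1d _ hy) hlocmax
    -- computation
    set qp : ℝ := qf x₀ p₀ with hqp_def
    have hqp_nonneg : 0 ≤ qp := qf_nonneg x₀ p₀
    have hqp_lt1 : qp < 1 := lt_trans hqp₀ hρsq_lt1
    set d : ℝ := 1 - qp with hd_def
    have hd_pos : 0 < d := by rw [hd_def]; linarith
    have hd_le1 : d ≤ 1 := by rw [hd_def]; linarith
    set w : ℝ := A * d ^ (-pp) with hw_def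
    have hdpow_pos : ∀ r : ℝ, 0 < d ^ r := fun r => Real.rpow_pos_of_pos hd_pos r
    have hw_pos : 0 < w := by rw [hw_def]; positivity
    have hw_ge_A : A ≤ w := by
      have h1 : (1:ℝ) ≤ d ^ (-pp) :=
        Real.one_le_rpow_of_pos_of_le_one_of_nonpos hd_pos hd_le1 (by linarith)
      calc A = A * 1 := by ring
        _ ≤ A * d ^ (-pp) := mul_le_mul_of_nonneg_left h1 hApos.le
    have hφ_gt_w : w < φ p₀ := by
      have : 0 < φ p₀ + g qp := hup₀
      simp only [hg_def] at this
      rw [hw_def, hd_def]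
      linarith
    have hfw_lt : f w < f (φ p₀) := hf_mono w (φ p₀) hw_pos hφ_gt_w
    -- f w ≥ β w^α / 2
    have hwc : 2 * c ≤ w := le_trans hA2c hw_ge_A
    have hhalf : β * w ^ α / 2 ≤ f w := by
      have h1 : w ^ (-γ) ≤ c ^ (-γ) := rpow_anti_base hc (by linarith) (by linarith)
      have h2 : σsq * c ^ (-γ) = β * c ^ α := by
        have := hfc
        simp only [hf_def] at this
        linarith
      have h3 : c ^ α ≤ w ^ α / 2 := by
        have h4 : c ≤ w / 2 := by linarith
        have h5 : c ^ α ≤ (w/2) ^ α := Real.rpow_le_rpow hc.le h4 (by linarith)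
        have h6 : (w/2) ^ α = w ^ α / 2 ^ α := Real.div_rpow hw_pos.le (by norm_num) α
        have h7 : (2:ℝ) ≤ 2 ^ α := by
          calc (2:ℝ) = 2 ^ (1:ℝ) := by rw [Real.rpow_one]
            _ ≤ 2 ^ α := Real.rpow_le_rpow_of_exponent_le one_le_two hα1.le
        have h8 : w ^ α / 2 ^ α ≤ w ^ α / 2 := by
          apply div_le_div_of_nonneg_left (Real.rpow_nonneg hw_pos.le α) (by norm_num) h7
        linarith
      have h9 : σsq * w ^ (-γ) ≤ β * w ^ α / 2 := by
        calc σsq * w ^ (-γ) ≤ σsq * c ^ (-γ) := mul_le_mul_of_nonneg_left h1 hσ.le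
          _ = β * c ^ α := h2
          _ ≤ β * (w ^ α / 2) := mul_le_mul_of_nonneg_left h3 hβ.le
          _ = β * w ^ α / 2 := by ring
      simp only [hf_def]
      linarith
    -- the bound from hkey
    have hlapval : lap φ p₀ = f (φ p₀) := heq p₀
    have hg1val : g₁ qp = -(A * pp * d ^ (-pp-1)) := by rw [hg1_def, hd_def]
    have hg2val : g₂ qp = -(A * pp * (pp+1) * d ^ (-pp-2)) := by rw [hg2_def, hd_def]
    have hBnd : f (φ p₀) ≤ 4 * qp * (A * pp * (pp+1) * d ^ (-pp-2))
        + 2 * n * (A * pp * d ^ (-pp-1)) := by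
      rw [← hlapval]
      have := hkey
      rw [hg1val, hg2val] at this
      linarith
    -- estimate the bound by A * pp * (4*(pp+1) + 2*n) * d^(-pp-2)
    have hd12 : d ^ (-pp-1) ≤ d ^ (-pp-2) :=
      Real.rpow_le_rpow_of_exponent_ge hd_pos hd_le1 (by linarith)
    have hBnd2 : f (φ p₀) ≤ A * pp * (4*(pp+1) + 2*n) * d ^ (-pp-2) := by
      have h1 : 4 * qp * (A * pp * (pp+1) * d ^ (-pp-2))
          ≤ 4 * (A * pp * (pp+1) * d ^ (-pp-2)) := by
        have hterm : 0 ≤ A * pp * (pp+1) * d ^ (-pp-2) := by positivity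
        have h1' : qp * (A * pp * (pp+1) * d ^ (-pp-2))
            ≤ 1 * (A * pp * (pp+1) * d ^ (-pp-2)) :=
          mul_le_mul_of_nonneg_right hqp_lt1.le hterm
        linarith
      have h2 : 2 * (n:ℝ) * (A * pp * d ^ (-pp-1)) ≤ 2 * n * (A * pp * d ^ (-pp-2)) := by
        have h2a : (0:ℝ) ≤ 2 * n * (A * pp) := by positivity
        have h2b : (2 * (n:ℝ) * (A * pp)) * d ^ (-pp-1) ≤ (2 * (n:ℝ) * (A * pp)) * d ^ (-pp-2) :=
          mul_le_mul_of_nonneg_left hd12 h2a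
        calc 2 * (n:ℝ) * (A * pp * d ^ (-pp-1)) = (2 * (n:ℝ) * (A * pp)) * d ^ (-pp-1) := by ring
          _ ≤ (2 * (n:ℝ) * (A * pp)) * d ^ (-pp-2) := h2b
          _ = 2 * (n:ℝ) * (A * pp * d ^ (-pp-2)) := by ring
      calc f (φ p₀) ≤ _ := hBnd
        _ ≤ 4 * (A * pp * (pp+1) * d ^ (-pp-2)) + 2 * n * (A * pp * d ^ (-pp-2)) := by linarith
        _ = A * pp * (4*(pp+1) + 2*n) * d ^ (-pp-2) := by ring
    -- β w^α / 2 = (β A^α/2) * d^(-pp-2) and strict comparison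
    have hwα : w ^ α = A ^ α * d ^ (-pp-2) := by
      rw [hw_def, Real.mul_rpow hApos.le (hdpow_pos _).le]
      congr 1
      rw [← Real.rpow_mul hd_pos.le]
      congr 1
      have : -pp * α = -(pp * α) := by ring
      rw [this, hppα]
      ring
    have hAα : A ^ α = A ^ (α-1) * A := by
      rw [← Real.rpow_add_one (ne_of_gt hApos)]
      congr 1
      ring
    have hstrict : A * pp * (4*(pp+1) + 2*n) < β * A ^ α / 2 := by
      rw [hAα]
      have h1 : β * K / 2 = pp * (2*n + 4*pp + 4) := by
        rw [hK_def]
        field_simp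
      have h2 : β * K * A / 2 < β * A ^ (α-1) * A / 2 := by
        have hb2 : 0 < β * A / 2 := by positivity
        have h2' : K * (β * A / 2) < A ^ (α-1) * (β * A / 2) :=
          (mul_lt_mul_iff_left₀ hb2).mpr hAK
        calc β * K * A / 2 = K * (β * A / 2) := by ring
          _ < A ^ (α-1) * (β * A / 2) := h2'
          _ = β * A ^ (α-1) * A / 2 := by ring
      calc A * pp * (4*(pp+1) + 2*n) = (β * K / 2) * A := by rw [h1]; ring
        _ = β * K * A / 2 := by ring
        _ < β * A ^ (α-1) * A / 2 := h2
        _ = β * (A ^ (α-1) * A) / 2 := by ring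
    have hfinal : A * pp * (4*(pp+1) + 2*n) * d ^ (-pp-2) < β * w ^ α / 2 := by
      rw [hwα]
      have hdp : 0 < d ^ (-pp-2) := hdpow_pos _
      calc A * pp * (4*(pp+1) + 2*n) * d ^ (-pp-2)
          < (β * A ^ α / 2) * d ^ (-pp-2) := by
            exact mul_lt_mul_of_pos_right hstrict hdp
        _ = β * (A ^ α * d ^ (-pp-2)) / 2 := by ring
    clear_value f
    linarith only [hBnd2, hfinal, hhalf, hfw_lt]
  -- STEP B : φ ≤ c everywhere
  have hrange_ne : (Set.range φ).Nonempty := ⟨φ 0, 0, rfl⟩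
  have hBddAbove : BddAbove (Set.range φ) := ⟨A, by rintro _ ⟨x, rfl⟩; exact hbound x⟩
  have hub : ∀ x, φ x ≤ c := by
    by_contra hcon
    push_neg at hcon
    obtain ⟨x₁, hx₁⟩ := hcon
    set M : ℝ := sSup (Set.range φ) with hM_def
    have hcM : c < M := lt_of_lt_of_le hx₁ (le_csSup hBddAbove ⟨x₁, rfl⟩)
    have hφM : ∀ x, φ x ≤ M := fun x => le_csSup hBddAbove ⟨x, rfl⟩
    set s' : ℝ := (c + M)/2 with hs'_def
    have hs'1 : c < s' := by rw [hs'_def]; linarith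
    have hs'2 : s' < M := by rw [hs'_def]; linarith
    have hfs' : 0 < f s' := by
      have := hf_mono c s' hc hs'1
      linarith [hfc]
    set μ : ℝ := f s' / (4*n) with hμ_def
    have hμpos : 0 < μ := div_pos hfs' (by positivity)
    set ε : ℝ := M - s' with hε_def
    have hεpos : 0 < ε := by rw [hε_def]; linarith
    obtain ⟨a, ⟨x₀, rfl⟩, hx₀⟩ := exists_lt_of_lt_csSup hrange_ne hs'2
    set Rsq : ℝ := 2*ε/μ with hRsq_def
    have hRsq_pos : 0 < Rsq := by rw [hRsq_def]; positivity
    set R : ℝ := Real.sqrt Rsq with hR_def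
    have hRpos : 0 < R := Real.sqrt_pos.mpr hRsq_pos
    set g : ℝ → ℝ := fun t => -(μ * t) with hg_def
    set v : EuclideanSpace ℝ (Fin n) → ℝ := fun y => φ y + g (qf x₀ y) with hv_def
    have hv_cont : Continuous v := by
      apply hφcont.add
      apply Continuous.neg
      exact (continuous_const.mul (qf_cont x₀))
    obtain ⟨p₀, hp₀mem, hp₀max⟩ := (isCompact_closedBall x₀ R).exists_isMaxOn
      ⟨x₀, Metric.mem_closedBall_self hRpos.le⟩ hv_cont.continuousOn
    have hvx₀ : s' < v x₀ := by
      simp only [hv_def, hg_def, qf_self]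
      simpa using hx₀
    have hvp₀ : s' < v p₀ :=
      lt_of_lt_of_le hvx₀ (hp₀max (Metric.mem_closedBall_self hRpos.le))
    have hqp₀ : qf x₀ p₀ < Rsq := by
      rcases lt_or_ge (qf x₀ p₀) Rsq with h | h
      · exact h
      exfalso
      have hqeq : qf x₀ p₀ = Rsq := by
        have := (mem_closedBall_iff_qf x₀ p₀ hRsq_pos.le).mp (hR_def ▸ hp₀mem)
        linarith
      have : v p₀ = φ p₀ - μ * Rsq := by
        simp only [hv_def, hg_def, hqeq]
        ring
      have hμR : μ * Rsq = 2*ε := by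
        rw [hRsq_def]
        field_simp
      have : v p₀ ≤ M - 2*ε := by
        rw [this, hμR]
        linarith [hφM p₀]
      have : v p₀ < s' := by
        rw [hε_def] at this
        linarith
      linarith
    have hlocmax : IsLocalMax v p₀ := by
      have hball : Metric.ball x₀ R ∈ nhds p₀ := by
        apply Metric.isOpen_ball.mem_nhds
        rw [hR_def]
        exact (mem_ball_iff_qf x₀ p₀).mpr hqp₀
      filter_upwards [hball] with y hy
      exact hp₀max (Metric.ball_subset_closedBall hy)
    have hgd : ∀ y ∈ (Set.univ : Set (EuclideanSpace ℝ (Fin n))),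
        HasDerivAt g ((fun _ : ℝ => -μ) (qf x₀ y)) (qf x₀ y) := by
      intro y _
      have := ((hasDerivAt_id (qf x₀ y)).const_mul μ).neg
      simpa [Pi.neg_def] using this
    have hg1d : ∀ y ∈ (Set.univ : Set (EuclideanSpace ℝ (Fin n))),
        HasDerivAt (fun _ : ℝ => -μ) ((fun _ : ℝ => (0:ℝ)) (qf x₀ y)) (qf x₀ y) :=
      fun y _ => hasDerivAt_const _ _
    have hkey := key_max hφ isOpen_univ (Set.mem_univ p₀) (c := x₀)
      (g := g) (g₁ := fun _ => -μ) (g₂ := fun _ => (0:ℝ)) hgd hg1d hlocmax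
    simp only [mul_zero, zero_add, mul_neg] at hkey
    have hlap : f (φ p₀) ≤ 2 * n * μ := by
      have := heq p₀
      simp only [hf_def]
      linarith [hkey, this]
    have hφp₀ : s' < φ p₀ := by
      have h1 : v p₀ ≤ φ p₀ := by
        simp only [hv_def, hg_def]
        have := mul_nonneg hμpos.le (qf_nonneg x₀ p₀)
        linarith
      linarith
    have hmono := hf_mono s' (φ p₀) (by rw [hs'_def]; linarith) hφp₀
    have h2nμ : 2 * (n:ℝ) * μ = f s' / 2 := by
      rw [hμ_def]
      field_simp
      ring
    rw [h2nμ] at hlap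
    clear_value f
    linarith only [hlap, hmono, hfs']
  -- STEP C : c ≤ φ x everywhere
  have hBddBelow : BddBelow (Set.range φ) := ⟨0, by rintro _ ⟨x, rfl⟩; exact (hpos x).le⟩
  have hlb : ∀ x, c ≤ φ x := by
    by_contra hcon
    push_neg at hcon
    obtain ⟨x₁, hx₁⟩ := hcon
    set m : ℝ := sInf (Set.range φ) with hm_def
    have hm0 : 0 ≤ m := le_csInf hrange_ne (by rintro _ ⟨x, rfl⟩; exact (hpos x).le)
    have hmc : m < c := lt_of_le_of_lt (csInf_le hBddBelow ⟨x₁, rfl⟩) hx₁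
    have hφm : ∀ x, m ≤ φ x := fun x => csInf_le hBddBelow ⟨x, rfl⟩
    set s' : ℝ := (m + c)/2 with hs'_def
    have hs'0 : 0 < s' := by rw [hs'_def]; linarith
    have hs'1 : m < s' := by rw [hs'_def]; linarith
    have hs'2 : s' < c := by rw [hs'_def]; linarith
    have hfs' : f s' < 0 := by
      have := hf_mono s' c hs'0 hs'2
      linarith [hfc]
    set μ : ℝ := -f s' / (4*n) with hμ_def
    have hμpos : 0 < μ := div_pos (by linarith) (by positivity)
    set ε : ℝ := s' - m with hε_def
    have hεpos : 0 < ε := by rw [hε_def]; linarith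
    obtain ⟨a, ⟨x₀, rfl⟩, hx₀⟩ := exists_lt_of_csInf_lt hrange_ne hs'1
    set Rsq : ℝ := 2*ε/μ with hRsq_def
    have hRsq_pos : 0 < Rsq := by rw [hRsq_def]; positivity
    set R : ℝ := Real.sqrt Rsq with hR_def
    have hRpos : 0 < R := Real.sqrt_pos.mpr hRsq_pos
    set g : ℝ → ℝ := fun t => μ * t with hg_def
    set v : EuclideanSpace ℝ (Fin n) → ℝ := fun y => φ y + g (qf x₀ y) with hv_def
    have hv_cont : Continuous v := hφcont.add (continuous_const.mul (qf_cont x₀))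
    obtain ⟨p₀, hp₀mem, hp₀min⟩ := (isCompact_closedBall x₀ R).exists_isMinOn
      ⟨x₀, Metric.mem_closedBall_self hRpos.le⟩ hv_cont.continuousOn
    have hvx₀ : v x₀ < s' := by
      simp only [hv_def, hg_def, qf_self]
      simpa using hx₀
    have hvp₀ : v p₀ < s' :=
      lt_of_le_of_lt (hp₀min (Metric.mem_closedBall_self hRpos.le)) hvx₀
    have hqp₀ : qf x₀ p₀ < Rsq := by
      rcases lt_or_ge (qf x₀ p₀) Rsq with h | h
      · exact h
      exfalso
      have hqeq : qf x₀ p₀ = Rsq := by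
        have := (mem_closedBall_iff_qf x₀ p₀ hRsq_pos.le).mp (hR_def ▸ hp₀mem)
        linarith
      have hμR : μ * Rsq = 2*ε := by
        rw [hRsq_def]
        field_simp
      have : s' + ε ≤ v p₀ := by
        simp only [hv_def, hg_def, hqeq, hμR]
        have := hφm p₀
        rw [hε_def]
        linarith
      linarith
    have hlocmin : IsLocalMin v p₀ := by
      have hball : Metric.ball x₀ R ∈ nhds p₀ := by
        apply Metric.isOpen_ball.mem_nhds
        rw [hR_def]
        exact (mem_ball_iff_qf x₀ p₀).mpr hqp₀
      filter_upwards [hball] with y hy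
      exact hp₀min (Metric.ball_subset_closedBall hy)
    have hgd : ∀ y ∈ (Set.univ : Set (EuclideanSpace ℝ (Fin n))),
        HasDerivAt g ((fun _ : ℝ => μ) (qf x₀ y)) (qf x₀ y) := by
      intro y _
      simpa using (hasDerivAt_id (qf x₀ y)).const_mul μ
    have hg1d : ∀ y ∈ (Set.univ : Set (EuclideanSpace ℝ (Fin n))),
        HasDerivAt (fun _ : ℝ => μ) ((fun _ : ℝ => (0:ℝ)) (qf x₀ y)) (qf x₀ y) :=
      fun y _ => hasDerivAt_const _ _
    have hkey := key_min hφ isOpen_univ (Set.mem_univ p₀) (c := x₀)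
      (g := g) (g₁ := fun _ => μ) (g₂ := fun _ => (0:ℝ)) hgd hg1d hlocmin
    simp only [mul_zero, zero_add] at hkey
    have hlap : -(2 * n * μ) ≤ f (φ p₀) := by
      have := heq p₀
      simp only [hf_def]
      linarith [hkey, this]
    have hφp₀ : φ p₀ < s' := by
      have h1 : φ p₀ ≤ v p₀ := by
        simp only [hv_def, hg_def]
        have := mul_nonneg hμpos.le (qf_nonneg x₀ p₀)
        linarith
      linarith
    have hmono := hf_mono (φ p₀) s' (hpos p₀) hφp₀
    have h2nμ : 2 * (n:ℝ) * μ = -f s' / 2 := by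
      rw [hμ_def]
      field_simp
      ring
    rw [h2nμ] at hlap
    clear_value f
    linarith only [hlap, hmono, hfs']
  intro x y
  have hx := le_antisymm (hub x) (hlb x)
  have hy := le_antisymm (hub y) (hlb y)
  rw [hx, hy]
end
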